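/- arXiv:math/0612593 — 4 statements merged into one kernel-verified Lean document; each statement's English description precedes it below -/
import Mathlib

section
/- Let A : X → ℝ be θ-Hölder for some θ ∈ (0,1]. In the set of all θ-Hölder sub-actions for A, equipped with the θ-Hölder topology, the subset of separating θ-Hölder sub-actions (those u with M_A(u) = Ω(A)) contains a countable intersection of subsets each of which is open and dense; in particular, the separating θ-Hölder sub-actions form a residual (comeagre) subset of the θ-Hölder sub-actions. -/
open MeasureTheory Filter Topology

section GLT

variable {X : Type*} [MetricSpace X]

/-- A transitive expanding dynamical system: a continuous, surjective, open,
several-to-one map whose inverse branches are uniformly contracting, and which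
is topologically transitive. -/
structure IsExpandingTransitive (T : X → X) : Prop where
  cont : Continuous T
  surj : Function.Surjective T
  isOpenMap : IsOpenMap T
  finite_preimages : ∀ x : X, {y : X | T y = x}.Finite
  transitive : ∀ U V : Set X, IsOpen U → IsOpen V → U.Nonempty → V.Nonempty →
    ∃ n : ℕ, ((T^[n]) ⁻¹' U ∩ V).Nonempty
  contracting : ∃ lam : ℝ, 0 < lam ∧ lam < 1 ∧ ∃ δ : ℝ, 0 < δ ∧
    ∀ x y : X, dist x y ≤ δ → dist x y ≤ lam * dist (T x) (T y)

/-- `Abar` is the ergodic minimizing value of `A`: the minimum (attained) of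
`∫ A dμ` over all `T`-invariant Borel probability measures `μ`. -/
def IsErgMinValue [MeasurableSpace X] (T : X → X) (A : X → ℝ) (Abar : ℝ) : Prop :=
  (∃ μ : Measure X, IsProbabilityMeasure μ ∧ MeasurePreserving T μ μ ∧ (∫ x, A x ∂μ) = Abar) ∧
  ∀ μ : Measure X, IsProbabilityMeasure μ → MeasurePreserving T μ μ → Abar ≤ ∫ x, A x ∂μ

/-- `f` is θ-Hölder. -/
def IsThetaHolder (θ : ℝ) (f : X → ℝ) : Prop :=
  ∃ C : ℝ, 0 ≤ C ∧ ∀ x y : X, |f x - f y| ≤ C * dist x y ^ θ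

/-- `u` is a (continuous) sub-action for `A` with ergodic minimizing value `Abar`. -/
def IsSubaction (T : X → X) (A : X → ℝ) (Abar : ℝ) (u : X → ℝ) : Prop :=
  Continuous u ∧ ∀ x : X, u (T x) - u x + Abar ≤ A x

/-- The contact locus of a sub-action `u`. -/
def contactLocus (T : X → X) (A : X → ℝ) (Abar : ℝ) (u : X → ℝ) : Set X :=
  {x : X | A x = u (T x) - u x + Abar}

/-- The set `Ω(A)` of non-wandering points with respect to `A`. -/
def nonwanderingSet (T : X → X) (A : X → ℝ) (Abar : ℝ) : Set X :=
  {x : X | ∀ ε : ℝ, 0 < ε → ∃ k : ℕ, 1 ≤ k ∧ ∃ y : X,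
    dist x y < ε ∧ dist x (T^[k] y) < ε ∧
    |∑ j ∈ Finset.range k, (A (T^[j] y) - Abar)| < ε}

/-- `u` is a calibrated sub-action: `u x = min_{T y = x} [u y + A y - Abar]`,
the minimum being attained. -/
def IsCalibrated (T : X → X) (A : X → ℝ) (Abar : ℝ) (u : X → ℝ) : Prop :=
  Continuous u ∧ ∀ x : X,
    (∀ y : X, T y = x → u x ≤ u y + A y - Abar) ∧
    (∃ y : X, T y = x ∧ u x = u y + A y - Abar)

/-- `S_A^ε(x, x', k)`: infimum of Birkhoff sums of `A - Abar` over orbit segments of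
length `k` starting within `ε` of `x` and ending within `ε` of `x'`
(`sInf ∅ = ⊤` in `EReal`). -/
noncomputable def birkhoffInf (T : X → X) (A : X → ℝ) (Abar : ℝ) (ε : ℝ) (x x' : X)
    (k : ℕ) : EReal :=
  sInf {v : EReal | ∃ z : X, dist z x < ε ∧ dist (T^[k] z) x' < ε ∧
    v = ((∑ j ∈ Finset.range k, (A (T^[j] z) - Abar) : ℝ) : EReal)}

/-- The Mañé potential `φ_A(x, x') = lim_{ε→0} inf_{k ≥ 1} S_A^ε(x, x', k)`;
since the quantity is nonincreasing in `ε`, the limit as `ε → 0` is the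
supremum over `ε > 0`. -/
noncomputable def manePotential (T : X → X) (A : X → ℝ) (Abar : ℝ) (x x' : X) : EReal :=
  ⨆ ε : {e : ℝ // 0 < e}, ⨅ k : {n : ℕ // 1 ≤ n}, birkhoffInf T A Abar ε.1 x x' k.1

/-- The Peierls barrier `h_A(x, x') = lim_{ε→0} liminf_{k→∞} S_A^ε(x, x', k)`;
since the quantity is nonincreasing in `ε`, the limit as `ε → 0` is the
supremum over `ε > 0`. -/
noncomputable def peierlsBarrier (T : X → X) (A : X → ℝ) (Abar : ℝ) (x x' : X) : EReal :=
  ⨆ ε : {e : ℝ // 0 < e},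
    Filter.liminf (fun k : ℕ => birkhoffInf T A Abar ε.1 x x' k) Filter.atTop

/-- `C` is an irreducible component of `Ω(A)`: an equivalence class of the
relation `x ∼ x' ↔ h_A(x, x') + h_A(x', x) = 0` on `Ω(A)`. -/
def IsIrredComponent (T : X → X) (A : X → ℝ) (Abar : ℝ) (C : Set X) : Prop :=
  ∃ x ∈ nonwanderingSet T A Abar, C = {y ∈ nonwanderingSet T A Abar |
    peierlsBarrier T A Abar x y + peierlsBarrier T A Abar y x = 0}

/-- The θ-Hölder norm `‖f‖_θ = sup |f| + sup_{x ≠ y} |f x - f y| / d(x,y)^θ`. -/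
noncomputable def holderNorm (θ : ℝ) (f : X → ℝ) : ℝ :=
  (⨆ x : X, |f x|) +
    ⨆ p : {p : X × X // p.1 ≠ p.2}, |f p.1.1 - f p.1.2| / dist p.1.1 p.1.2 ^ θ

end GLT

/-!
Every sub-action is calibrated on `Ω(A)`: along the almost closed orbit segments with almost
vanishing Birkhoff sums that define `Ω(A)`, the nonnegative defect `A - (u ∘ T - u + Ā)`
telescopes to almost nothing. As `Ω(A)` is closed, `u` is separating as soon as its contact locus
lies in every thickening of `Ω(A)`; so it suffices that, for an open `W ⊇ Ω(A)`, having contact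
locus inside `W` is an open and dense condition.

It is open because the defect of `u` has a positive minimum on the compact set `Wᶜ`, and passing
to `v` changes it by at most `2 ‖v - u‖_θ`. It is dense because the contact locus of a convex
combination of sub-actions is the intersection of their contact loci, so by compactness of `Wᶜ`
it is enough to find, for each `x ∉ Ω(A)`, a θ-Hölder sub-action that is strict at `x`. The
penalized Mañé potential `ψ z = inf {S_k(A - Ā)(y) + K d(y, x)^θ : k ≥ 1, T^k y = z}` is one:
it is a sub-action by construction, `ψ (T x) ≤ A x - Ā` (take `k = 1`, `y = x`) while `ψ x > 0`
for large `K`, and it is θ-Hölder because pulling an orbit segment that ends at `z` back along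
the contracting inverse branches gives one ending at any nearby `z'` with comparable Birkhoff sum.
-/

open Metric

section Holder

variable {X : Type*} [MetricSpace X]

variable {θ : ℝ} {f g : X → ℝ}

lemma dist_rpow_le_add (hθ0 : 0 ≤ θ) (hθ1 : θ ≤ 1) (a b c : X) :
    dist a c ^ θ ≤ dist a b ^ θ + dist b c ^ θ :=
  calc dist a c ^ θ ≤ (dist a b + dist b c) ^ θ :=
        Real.rpow_le_rpow dist_nonneg (dist_triangle a b c) hθ0
    _ ≤ dist a b ^ θ + dist b c ^ θ := by
        exact_mod_cast NNReal.rpow_add_le_add_rpow (nndist a b) (nndist b c) hθ0 hθ1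

lemma IsThetaHolder.continuous (hθ : 0 < θ) (hf : IsThetaHolder θ f) : Continuous f := by
  obtain ⟨C, -, hC⟩ := hf
  refine continuous_iff_continuousAt.2 fun x => tendsto_iff_dist_tendsto_zero.2 ?_
  have hlim : Tendsto (fun y => C * dist y x ^ θ) (𝓝 x) (𝓝 (C * dist x x ^ θ)) :=
    ((continuous_id.dist continuous_const).rpow_const fun _ => Or.inr hθ.le).const_mul C
      |>.tendsto x
  rw [dist_self, Real.zero_rpow hθ.ne', mul_zero] at hlim
  exact squeeze_zero (fun _ => dist_nonneg) (fun y => (Real.dist_eq _ _).trans_le (hC y x)) hlim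

lemma IsThetaHolder.add (hf : IsThetaHolder θ f) (hg : IsThetaHolder θ g) :
    IsThetaHolder θ (fun x => f x + g x) := by
  obtain ⟨C, hC, hf⟩ := hf
  obtain ⟨D, hD, hg⟩ := hg
  refine ⟨C + D, add_nonneg hC hD, fun x y => ?_⟩
  calc |f x + g x - (f y + g y)| = |(f x - f y) + (g x - g y)| := by ring_nf
    _ ≤ |f x - f y| + |g x - g y| := abs_add_le _ _
    _ ≤ (C + D) * dist x y ^ θ := by linarith [hf x y, hg x y]

lemma IsThetaHolder.const_mul (hf : IsThetaHolder θ f) (c : ℝ) :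
    IsThetaHolder θ (fun x => c * f x) := by
  obtain ⟨C, hC, hf⟩ := hf
  refine ⟨|c| * C, by positivity, fun x y => ?_⟩
  rw [← mul_sub, abs_mul, mul_assoc]
  exact mul_le_mul_of_nonneg_left (hf x y) (abs_nonneg c)

lemma isThetaHolder_of_forall_dist_lt {r B C : ℝ} (hθ : 0 ≤ θ) (hr : 0 < r) (hC : 0 ≤ C)
    (hB : ∀ x, |f x| ≤ B) (hloc : ∀ x y, dist x y < r → f y ≤ f x + C * dist x y ^ θ) :
    IsThetaHolder θ f := by
  refine ⟨max C (2 * B / r ^ θ), le_max_of_le_left hC, fun x y => ?_⟩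
  rcases lt_or_ge (dist x y) r with hxy | hxy
  · have h1 := hloc x y hxy
    have h2 := hloc y x (by rwa [dist_comm])
    rw [dist_comm] at h2
    have h3 : C * dist x y ^ θ ≤ max C (2 * B / r ^ θ) * dist x y ^ θ := by
      gcongr
      exact le_max_left _ _
    rw [abs_le]
    constructor <;> linarith
  · have hrθ : 0 < r ^ θ := Real.rpow_pos_of_pos hr θ
    have hB0 : 0 ≤ B := (abs_nonneg _).trans (hB x)
    calc |f x - f y| ≤ 2 * B := by linarith [abs_sub (f x) (f y), hB x, hB y]
      _ = 2 * B / r ^ θ * r ^ θ := (div_mul_cancel₀ _ hrθ.ne').symm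
      _ ≤ max C (2 * B / r ^ θ) * dist x y ^ θ := by
        gcongr
        exact le_max_right _ _

lemma holderNorm_const_mul {c : ℝ} (hc : 0 ≤ c) (f : X → ℝ) :
    holderNorm θ (fun x => c * f x) = c * holderNorm θ f := by
  simp only [holderNorm, mul_add, Real.mul_iSup_of_nonneg hc, ← mul_sub, abs_mul,
    abs_of_nonneg hc, mul_div_assoc]

lemma abs_le_holderNorm [CompactSpace X] (hf : Continuous f) (x : X) :
    |f x| ≤ holderNorm θ f :=
  le_add_of_le_of_nonneg (le_ciSup (isCompact_range (continuous_abs.comp hf)).bddAbove x)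
    (Real.iSup_nonneg fun _ => by positivity)

end Holder

section Subaction

variable {X : Type*} {T : X → X} {A u w : X → ℝ} {Abar : ℝ}

def subactionDefect (T : X → X) (A : X → ℝ) (Abar : ℝ) (u : X → ℝ) (x : X) : ℝ :=
  A x - (u (T x) - u x + Abar)

lemma mem_contactLocus_iff {x : X} :
    x ∈ contactLocus T A Abar u ↔ subactionDefect T A Abar u x = 0 :=
  sub_eq_zero.symm

lemma birkhoffSum_subactionDefect (k : ℕ) (y : X) :
    birkhoffSum T (subactionDefect T A Abar u) k y =
      birkhoffSum T (fun p => A p - Abar) k y - (u (T^[k] y) - u y) := by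
  induction k with
  | zero => simp
  | succ k ih =>
    rw [birkhoffSum_succ, birkhoffSum_succ, ih, Function.iterate_succ_apply']
    simp only [subactionDefect]
    ring

lemma subactionDefect_convexComb (s : ℝ) :
    subactionDefect T A Abar (fun x => (1 - s) * u x + s * w x) =
      fun x => (1 - s) * subactionDefect T A Abar u x + s * subactionDefect T A Abar w x := by
  funext x
  simp only [subactionDefect]
  ring

variable [MetricSpace X]

lemma IsSubaction.subactionDefect_nonneg (hu : IsSubaction T A Abar u) (x : X) :
    0 ≤ subactionDefect T A Abar u x :=
  sub_nonneg.2 (hu.2 x)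

lemma continuous_subactionDefect (hA : Continuous A) (hT : Continuous T) (hu : Continuous u) :
    Continuous (subactionDefect T A Abar u) := by
  unfold subactionDefect
  fun_prop

lemma isClosed_contactLocus (hA : Continuous A) (hT : Continuous T) (hu : Continuous u) :
    IsClosed (contactLocus T A Abar u) :=
  isClosed_eq hA (by fun_prop)

lemma IsSubaction.sub_le_birkhoffSum (hu : IsSubaction T A Abar u) (k : ℕ) (y : X) :
    u (T^[k] y) - u y ≤ birkhoffSum T (fun p => A p - Abar) k y := by
  have := Finset.sum_nonneg fun j (_ : j ∈ Finset.range k) =>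
    hu.subactionDefect_nonneg (T^[j] y)
  rw [← birkhoffSum, birkhoffSum_subactionDefect] at this
  linarith

lemma IsSubaction.exists_le_birkhoffSum [CompactSpace X] (hu : IsSubaction T A Abar u) :
    ∃ m, ∀ k y, m ≤ birkhoffSum T (fun p => A p - Abar) k y := by
  obtain ⟨a, ha⟩ := (isCompact_range hu.1).bddBelow
  obtain ⟨b, hb⟩ := (isCompact_range hu.1).bddAbove
  exact ⟨a - b, fun k y => by
    linarith [ha ⟨T^[k] y, rfl⟩, hb ⟨y, rfl⟩, hu.sub_le_birkhoffSum k y]⟩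

lemma IsSubaction.convexComb (hu : IsSubaction T A Abar u) (hw : IsSubaction T A Abar w)
    {s : ℝ} (hs0 : 0 ≤ s) (hs1 : s ≤ 1) :
    IsSubaction T A Abar (fun x => (1 - s) * u x + s * w x) := by
  refine ⟨by have := hu.1; have := hw.1; fun_prop, fun x => ?_⟩
  have := mul_le_mul_of_nonneg_left (hu.2 x) (sub_nonneg.2 hs1)
  have := mul_le_mul_of_nonneg_left (hw.2 x) hs0
  dsimp only
  linarith

lemma contactLocus_convexComb (hu : IsSubaction T A Abar u) (hw : IsSubaction T A Abar w)
    {s : ℝ} (hs0 : 0 < s) (hs1 : s < 1) :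
    contactLocus T A Abar (fun x => (1 - s) * u x + s * w x) =
      contactLocus T A Abar u ∩ contactLocus T A Abar w := by
  ext x
  have hu0 := hu.subactionDefect_nonneg x
  have hw0 := hw.subactionDefect_nonneg x
  have hs1' : 0 < 1 - s := sub_pos.2 hs1
  simp only [Set.mem_inter_iff, mem_contactLocus_iff, subactionDefect_convexComb]
  rw [add_eq_zero_iff_of_nonneg (by positivity) (by positivity), mul_eq_zero, mul_eq_zero]
  simp [hs0.ne', hs1'.ne']

lemma isClosed_nonwanderingSet : IsClosed (nonwanderingSet T A Abar) := by
  refine isClosed_of_closure_subset fun z hz ε hε => ?_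
  obtain ⟨x, hx, hzx⟩ := Metric.mem_closure_iff.1 hz (ε / 2) (half_pos hε)
  obtain ⟨k, hk, y, hxy, hxky, hS⟩ := hx (ε / 2) (half_pos hε)
  exact ⟨k, hk, y, by linarith [dist_triangle z x y],
    by linarith [dist_triangle z x (T^[k] y)], by linarith⟩

lemma nonwanderingSet_subset_contactLocus (hA : Continuous A) (hT : Continuous T)
    (hu : IsSubaction T A Abar u) : nonwanderingSet T A Abar ⊆ contactLocus T A Abar u := by
  intro x hx
  rw [mem_contactLocus_iff]
  refine le_antisymm (le_of_forall_pos_lt_add fun ε hε => ?_) (hu.subactionDefect_nonneg x)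
  set D := subactionDefect T A Abar u
  have hD : Continuous D := continuous_subactionDefect hA hT hu.1
  obtain ⟨ρ, hρ, hnear⟩ := Metric.eventually_nhds_iff.1
    ((Metric.tendsto_nhds.1 (hD.tendsto x) (ε / 4) (by positivity)).and
      (Metric.tendsto_nhds.1 (hu.1.tendsto x) (ε / 4) (by positivity)))
  obtain ⟨k, hk, y, hxy, hxky, hS⟩ := hx (min ρ (ε / 4)) (by positivity)
  have hy := hnear (by rw [dist_comm]; exact hxy.trans_le (min_le_left _ _))
  have hky := hnear (by rw [dist_comm]; exact hxky.trans_le (min_le_left _ _))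
  have hDy : D y ≤ birkhoffSum T D k y :=
    Finset.single_le_sum (f := fun j => D (T^[j] y)) (fun j _ => hu.subactionDefect_nonneg _)
      (Finset.mem_range.2 hk)
  have hS' : |birkhoffSum T (fun p => A p - Abar) k y| < ε / 4 :=
    hS.trans_le (min_le_right _ _)
  rw [birkhoffSum_subactionDefect] at hDy
  simp only [Real.dist_eq] at hy hky
  linarith [abs_lt.1 hy.1, abs_lt.1 hy.2, abs_lt.1 hky.2, abs_lt.1 hS']

end Subaction

section InverseBranches

variable {X : Type*} [MetricSpace X] {T : X → X}

lemma IsOpenMap.exists_ball_subset_image_ball [CompactSpace X] (hT : IsOpenMap T)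
    (hc : Continuous T) {ρ : ℝ} (hρ : 0 < ρ) :
    ∃ r > 0, ∀ w, ball (T w) r ⊆ T '' ball w ρ := by
  -- `(w, z) ∈ O` forces `z ∈ T '' ball w ρ`, and `O` is a neighbourhood of the compact
  -- graph of `T`
  set O : Set (X × X) := ⋃ y, ball y (ρ / 2) ×ˢ (T '' ball y (ρ / 2))
  have hO : IsOpen O := isOpen_iUnion fun y => isOpen_ball.prod (hT _ isOpen_ball)
  have hgraph : Set.range (fun w => (w, T w)) ⊆ O := by
    rintro _ ⟨w, rfl⟩
    exact Set.mem_iUnion.2 ⟨w, mem_ball_self (half_pos hρ),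
      Set.mem_image_of_mem T (mem_ball_self (half_pos hρ))⟩
  obtain ⟨r, hr, hrO⟩ :=
    (isCompact_range (continuous_id.prodMk hc)).exists_thickening_subset_open hO hgraph
  refine ⟨r, hr, fun w z hz => ?_⟩
  have hwz : (w, z) ∈ thickening r (Set.range fun w => (w, T w)) :=
    mem_thickening_iff.2 ⟨(w, T w), ⟨w, rfl⟩, by simpa [Prod.dist_eq, dist_comm] using hz⟩
  obtain ⟨y, hwy, y', hy', rfl⟩ := Set.mem_iUnion.1 (hrO hwz)
  refine ⟨y', ?_, rfl⟩
  rw [mem_ball] at hwy hy' ⊢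
  linarith [dist_triangle y' y w, dist_comm y w]

/-- Pulling the orbit segment of `y` back along contracting inverse branches; the constant is
`C (λ^θ + λ^(2θ) + ⋯)`. -/
lemma exists_iterate_eq_birkhoffSum_le {g : X → ℝ} {lam δ r C θ : ℝ} (hlam0 : 0 ≤ lam)
    (hlam1 : lam < 1) (hθ : 0 < θ) (hC : 0 ≤ C)
    (hcontr : ∀ x y, dist x y ≤ δ → dist x y ≤ lam * dist (T x) (T y))
    (hball : ∀ w, ball (T w) r ⊆ T '' ball w δ)
    (hg : ∀ p q, |g p - g q| ≤ C * dist p q ^ θ) (k : ℕ) (y z : X)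
    (hz : dist (T^[k] y) z < r) :
    ∃ y', T^[k] y' = z ∧ dist y' y ≤ dist (T^[k] y) z ∧
      birkhoffSum T g k y' ≤
        birkhoffSum T g k y + C * (lam ^ θ / (1 - lam ^ θ)) * dist (T^[k] y) z ^ θ := by
  have hr1 : lam ^ θ < 1 := Real.rpow_lt_one hlam0 hlam1 hθ
  set q := lam ^ θ / (1 - lam ^ θ)
  have hq : 0 ≤ q := div_nonneg (Real.rpow_nonneg hlam0 θ) (sub_nonneg.2 hr1.le)
  induction k generalizing z with
  | zero => exact ⟨z, rfl, by simp [dist_comm], by simp; positivity⟩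
  | succ k ih =>
    simp only [Function.iterate_succ_apply'] at hz ⊢
    set e := dist (T (T^[k] y)) z
    obtain ⟨w, hw, rfl⟩ := hball _ (mem_ball_comm.1 hz)
    have hwe : dist (T^[k] y) w ≤ lam * e := by
      have := hcontr _ _ (mem_ball.1 hw).le
      rw [dist_comm (T w)] at this
      rwa [dist_comm]
    have hwθ : dist (T^[k] y) w ^ θ ≤ lam ^ θ * e ^ θ := by
      rw [← Real.mul_rpow hlam0 dist_nonneg]
      exact Real.rpow_le_rpow dist_nonneg hwe hθ.le
    have hle : lam * e ≤ e := mul_le_of_le_one_left dist_nonneg (by linarith)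
    obtain ⟨y', rfl, hy'y, hsum⟩ := ih w (by linarith)
    have hgw := (abs_le.1 (hg (T^[k] y') (T^[k] y))).2
    rw [dist_comm] at hgw
    have hfin : C * q * (lam ^ θ * e ^ θ) + C * (lam ^ θ * e ^ θ) = C * q * e ^ θ := by
      have : 1 - lam ^ θ ≠ 0 := (sub_pos.2 hr1).ne'
      simp only [q]
      field_simp
      ring
    refine ⟨y', rfl, by linarith, ?_⟩
    rw [birkhoffSum_succ, birkhoffSum_succ]
    linarith [mul_le_mul_of_nonneg_left hwθ (mul_nonneg hC hq), mul_le_mul_of_nonneg_left hwθ hC]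

end InverseBranches

section PenalizedPotential

variable {X : Type*} [MetricSpace X] {T : X → X} {A u : X → ℝ} {Abar K θ : ℝ} {x z : X}

def penalizedSums (T : X → X) (A : X → ℝ) (Abar K θ : ℝ) (x z : X) : Set ℝ :=
  {v | ∃ k, 1 ≤ k ∧ ∃ y, T^[k] y = z ∧
    v = birkhoffSum T (fun p => A p - Abar) k y + K * dist y x ^ θ}

/-- `sInf` of the penalized sums: a genuine infimum only when some sub-action bounds Birkhoff sums
below and `T` is onto, which is why the lemmas below assume both. -/
noncomputable def penalizedPotential (T : X → X) (A : X → ℝ) (Abar K θ : ℝ) (x z : X) :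
    ℝ :=
  sInf (penalizedSums T A Abar K θ x z)

lemma penalizedPotential_le [CompactSpace X] (hu : IsSubaction T A Abar u) (hK : 0 ≤ K)
    {k : ℕ} (hk : 1 ≤ k) {y : X} (hy : T^[k] y = z) :
    penalizedPotential T A Abar K θ x z ≤
      birkhoffSum T (fun p => A p - Abar) k y + K * dist y x ^ θ := by
  obtain ⟨m, hm⟩ := hu.exists_le_birkhoffSum
  refine csInf_le ⟨m, ?_⟩ ⟨k, hk, y, hy, rfl⟩
  rintro _ ⟨k, -, y, -, rfl⟩
  linarith [hm k y, mul_nonneg hK (Real.rpow_nonneg (dist_nonneg (x := y) (y := x)) θ)]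

lemma le_penalizedPotential (hT : Function.Surjective T) {a : ℝ}
    (h : ∀ k, 1 ≤ k → ∀ y, T^[k] y = z →
      a ≤ birkhoffSum T (fun p => A p - Abar) k y + K * dist y x ^ θ) :
    a ≤ penalizedPotential T A Abar K θ x z := by
  obtain ⟨y, hy⟩ := hT z
  exact le_csInf ⟨_, 1, le_rfl, y, by simpa using hy, rfl⟩
    (by rintro _ ⟨k, hk, y, hy, rfl⟩; exact h k hk y hy)

lemma penalizedPotential_apply_le [CompactSpace X] (hT : Function.Surjective T)
    (hu : IsSubaction T A Abar u) (hK : 0 ≤ K) (z : X) :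
    penalizedPotential T A Abar K θ x (T z) ≤
      penalizedPotential T A Abar K θ x z + (A z - Abar) := by
  rw [← sub_le_iff_le_add]
  refine le_penalizedPotential hT fun k hk y hy => ?_
  have := penalizedPotential_le hu hK (x := x) (θ := θ) (k := k + 1) (Nat.le_succ_of_le hk)
    (y := y) (by rw [Function.iterate_succ_apply', hy])
  rw [birkhoffSum_succ, hy] at this
  linarith

lemma penalizedPotential_apply_self_le [CompactSpace X] (hθ : θ ≠ 0)
    (hu : IsSubaction T A Abar u) (hK : 0 ≤ K) :
    penalizedPotential T A Abar K θ x (T x) ≤ A x - Abar := by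
  simpa [birkhoffSum_one, Real.zero_rpow hθ] using
    penalizedPotential_le hu hK (k := 1) (x := x) (θ := θ) le_rfl (y := x) (by simp)

lemma exists_abs_penalizedPotential_le [CompactSpace X] (hT : Function.Surjective T)
    (hA : Continuous A) (hθ : 0 ≤ θ) (hu : IsSubaction T A Abar u) (hK : 0 ≤ K) :
    ∃ B, ∀ z, |penalizedPotential T A Abar K θ x z| ≤ B := by
  obtain ⟨m, hm⟩ := hu.exists_le_birkhoffSum
  have hc : Continuous fun y => A y - Abar + K * dist y x ^ θ := by
    have : Continuous fun y => dist y x ^ θ :=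
      (continuous_id.dist continuous_const).rpow_const fun _ => Or.inr hθ
    fun_prop
  obtain ⟨M, hM⟩ := (isCompact_range hc).bddAbove
  refine ⟨max M (-m), fun z => abs_le.2 ⟨?_, ?_⟩⟩
  · have : m ≤ penalizedPotential T A Abar K θ x z := le_penalizedPotential hT fun k _ y _ => by
      linarith [hm k y, mul_nonneg hK (Real.rpow_nonneg (dist_nonneg (x := y) (y := x)) θ)]
    linarith [le_max_right M (-m)]
  · obtain ⟨y, hy⟩ := hT z
    have := penalizedPotential_le hu hK (x := x) (θ := θ) (k := 1) le_rfl (y := y) (by simpa)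
    rw [birkhoffSum_one] at this
    linarith [hM ⟨y, rfl⟩, le_max_left M (-m)]

lemma exists_penalizedPotential_le_add [CompactSpace X] (hT : IsExpandingTransitive T)
    (hθ0 : 0 < θ) (hθ1 : θ ≤ 1) (hA : IsThetaHolder θ A) (hu : IsSubaction T A Abar u)
    (hK : 0 ≤ K) :
    ∃ r > 0, ∃ C ≥ 0, ∀ z z', dist z z' < r →
      penalizedPotential T A Abar K θ x z' ≤
        penalizedPotential T A Abar K θ x z + C * dist z z' ^ θ := by
  obtain ⟨lam, hlam0, hlam1, δ, hδ, hcontr⟩ := hT.contracting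
  obtain ⟨r, hr, hball⟩ := hT.isOpenMap.exists_ball_subset_image_ball hT.cont hδ
  obtain ⟨CA, hCA, hA⟩ := hA
  have hg : ∀ p q, |(A p - Abar) - (A q - Abar)| ≤ CA * dist p q ^ θ := fun p q => by
    simpa using hA p q
  have hq : 0 ≤ lam ^ θ / (1 - lam ^ θ) := div_nonneg (Real.rpow_nonneg hlam0.le θ)
    (sub_nonneg.2 (Real.rpow_le_one hlam0.le hlam1.le hθ0.le))
  refine ⟨r, hr, CA * (lam ^ θ / (1 - lam ^ θ)) + K, by positivity, fun z z' hzz' => ?_⟩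
  rw [← sub_le_iff_le_add]
  refine le_penalizedPotential hT.surj fun k hk y hy => ?_
  subst hy
  obtain ⟨y', hy', hy'y, hsum⟩ := exists_iterate_eq_birkhoffSum_le hlam0.le hlam1 hθ0 hCA
    hcontr hball hg k y z' hzz'
  have hpen : dist y' x ^ θ ≤ dist y x ^ θ + dist (T^[k] y) z' ^ θ :=
    calc dist y' x ^ θ ≤ dist y' y ^ θ + dist y x ^ θ := dist_rpow_le_add hθ0.le hθ1 y' y x
      _ ≤ dist (T^[k] y) z' ^ θ + dist y x ^ θ := by gcongr
      _ = dist y x ^ θ + dist (T^[k] y) z' ^ θ := add_comm _ _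
  linarith [penalizedPotential_le hu hK hk hy' (x := x) (θ := θ),
    mul_le_mul_of_nonneg_left hpen hK]

lemma isThetaHolder_penalizedPotential [CompactSpace X] (hT : IsExpandingTransitive T)
    (hθ0 : 0 < θ) (hθ1 : θ ≤ 1) (hA : IsThetaHolder θ A) (hu : IsSubaction T A Abar u)
    (hK : 0 ≤ K) (x : X) :
    IsThetaHolder θ (penalizedPotential T A Abar K θ x) := by
  obtain ⟨B, hB⟩ := exists_abs_penalizedPotential_le hT.surj (hA.continuous hθ0) hθ0.le hu hK
  obtain ⟨r, hr, C, hC, hloc⟩ := exists_penalizedPotential_le_add hT hθ0 hθ1 hA hu hK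
  exact isThetaHolder_of_forall_dist_lt hθ0.le hr hC hB hloc

end PenalizedPotential

section Genericity

variable {X : Type*} [MetricSpace X] {T : X → X} {A u : X → ℝ} {Abar θ : ℝ}

lemma exists_pos_le_birkhoffSum_of_notMem_nonwanderingSet (hu : IsSubaction T A Abar u) {x : X}
    (hx : x ∉ nonwanderingSet T A Abar) :
    ∃ ε > 0, ∃ ρ > 0, ∀ k, 1 ≤ k → ∀ y, T^[k] y = x → dist y x < ρ →
      ε ≤ birkhoffSum T (fun p => A p - Abar) k y := by
  simp only [nonwanderingSet, Set.mem_ofPred_eq, not_forall, not_exists, not_and, not_lt] at hx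
  obtain ⟨ε, hε, hnw⟩ := hx
  obtain ⟨η, hη, hηu⟩ := Metric.continuous_iff.1 hu.1 x ε hε
  refine ⟨ε, hε, min ε η, lt_min hε hη, fun k hk y hy hyx => ?_⟩
  have habs : ε ≤ |birkhoffSum T (fun p => A p - Abar) k y| :=
    hnw k hk y (by rw [dist_comm]; exact hyx.trans_le (min_le_left _ _))
      (by rwa [hy, dist_self])
  have hlow := hu.sub_le_birkhoffSum k y
  have hux := hηu y (hyx.trans_le (min_le_right _ _))
  rw [hy] at hlow
  rw [Real.dist_eq] at hux
  rcases le_abs.1 habs with h | h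
  · exact h
  · linarith [abs_lt.1 hux]

lemma exists_subaction_notMem_contactLocus [CompactSpace X] (hT : IsExpandingTransitive T)
    (hθ0 : 0 < θ) (hθ1 : θ ≤ 1) (hA : IsThetaHolder θ A) (hu : IsSubaction T A Abar u)
    {x : X} (hx : x ∉ nonwanderingSet T A Abar) :
    ∃ ψ, IsThetaHolder θ ψ ∧ IsSubaction T A Abar ψ ∧ x ∉ contactLocus T A Abar ψ := by
  obtain ⟨ε, hε, ρ, hρ, hret⟩ := exists_pos_le_birkhoffSum_of_notMem_nonwanderingSet hu hx
  obtain ⟨m, hm⟩ := hu.exists_le_birkhoffSum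
  -- the penalty for starting at distance `≥ ρ` from `x` exceeds `ε - m`
  set K := (ε + |m|) / ρ ^ θ
  have hρθ : 0 < ρ ^ θ := Real.rpow_pos_of_pos hρ θ
  have hK : 0 ≤ K := by positivity
  set ψ := penalizedPotential T A Abar K θ x
  have hψ : IsThetaHolder θ ψ := isThetaHolder_penalizedPotential hT hθ0 hθ1 hA hu hK x
  have hψx : ε ≤ ψ x := le_penalizedPotential hT.surj fun k hk y hy => by
    have hpen : 0 ≤ K * dist y x ^ θ := by positivity
    rcases lt_or_ge (dist y x) ρ with hyx | hyx
    · linarith [hret k hk y hy hyx]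
    · have : ε + |m| ≤ K * dist y x ^ θ :=
        calc ε + |m| = K * ρ ^ θ := (div_mul_cancel₀ _ hρθ.ne').symm
          _ ≤ K * dist y x ^ θ := by gcongr
      linarith [hm k y, neg_abs_le m]
  have hψTx := penalizedPotential_apply_self_le hθ0.ne' hu hK (x := x)
  refine ⟨ψ, hψ, ⟨hψ.continuous hθ0, fun z => ?_⟩, fun hcon => ?_⟩
  · linarith [penalizedPotential_apply_le hT.surj hu hK z (x := x) (θ := θ)]
  · have : A x = ψ (T x) - ψ x + Abar := hcon
    linarith

lemma exists_subaction_contactLocus_subset [CompactSpace X] (hT : IsExpandingTransitive T)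
    (hθ0 : 0 < θ) (hθ1 : θ ≤ 1) (hA : IsThetaHolder θ A) (hu1 : IsThetaHolder θ u)
    (hu : IsSubaction T A Abar u) {W : Set X} (hW : IsOpen W)
    (hΩW : nonwanderingSet T A Abar ⊆ W) :
    ∃ w, IsThetaHolder θ w ∧ IsSubaction T A Abar w ∧ contactLocus T A Abar w ⊆ W := by
  suffices ∃ w, IsThetaHolder θ w ∧ IsSubaction T A Abar w ∧
      Disjoint (contactLocus T A Abar w) Wᶜ by
    simpa only [Set.disjoint_compl_right_iff_subset] using this
  refine hW.isClosed_compl.isCompact.induction_on ⟨u, hu1, hu, Set.disjoint_empty _⟩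
    (fun s t hst ⟨w, hw1, hw, hwt⟩ => ⟨w, hw1, hw, hwt.mono_right hst⟩)
    (fun s t ⟨w₁, hH₁, hS₁, hs⟩ ⟨w₂, hH₂, hS₂, ht⟩ => ?_) fun x hx => ?_
  · refine ⟨_, (hH₁.const_mul _).add (hH₂.const_mul _), hS₁.convexComb hS₂ (s := 1 / 2)
      (by norm_num) (by norm_num), ?_⟩
    rw [contactLocus_convexComb hS₁ hS₂ (by norm_num) (by norm_num)]
    exact Disjoint.union_right (hs.mono_left Set.inter_subset_left)
      (ht.mono_left Set.inter_subset_right)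
  · obtain ⟨ψ, hψ1, hψ, hxψ⟩ :=
      exists_subaction_notMem_contactLocus hT hθ0 hθ1 hA hu fun h => hx (hΩW h)
    refine ⟨(contactLocus T A Abar ψ)ᶜ, mem_nhdsWithin_of_mem_nhds
      ((isClosed_contactLocus (hA.continuous hθ0) hT.cont hψ.1).isOpen_compl.mem_nhds hxψ),
      ψ, hψ1, hψ, disjoint_compl_right⟩

lemma exists_holderNorm_sub_lt_contactLocus_subset [CompactSpace X] (hT : IsExpandingTransitive T)
    (hθ0 : 0 < θ) (hθ1 : θ ≤ 1) (hA : IsThetaHolder θ A) (hu1 : IsThetaHolder θ u)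
    (hu : IsSubaction T A Abar u) {W : Set X} (hW : IsOpen W)
    (hΩW : nonwanderingSet T A Abar ⊆ W) {ε : ℝ} (hε : 0 < ε) :
    ∃ v, (IsThetaHolder θ v ∧ IsSubaction T A Abar v ∧ contactLocus T A Abar v ⊆ W) ∧
      holderNorm θ (fun x => v x - u x) < ε := by
  obtain ⟨w, hw1, hw, hwW⟩ :=
    exists_subaction_contactLocus_subset hT hθ0 hθ1 hA hu1 hu hW hΩW
  set N := holderNorm θ (fun x => w x - u x)
  set s := min (1 / 2) (ε / (|N| + 1))
  have hs0 : 0 < s := lt_min (by norm_num) (by positivity)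
  have hs1 : s < 1 := (min_le_left _ _).trans_lt (by norm_num)
  refine ⟨fun x => (1 - s) * u x + s * w x, ⟨(hu1.const_mul _).add (hw1.const_mul _),
    hu.convexComb hw hs0.le hs1.le, ?_⟩, ?_⟩
  · rw [contactLocus_convexComb hu hw hs0 hs1]
    exact Set.inter_subset_right.trans hwW
  · have hvu : (fun x => (1 - s) * u x + s * w x - u x) = fun x => s * (w x - u x) := by
      funext x
      ring
    rw [hvu, holderNorm_const_mul hs0.le]
    calc s * N ≤ ε / (|N| + 1) * |N| :=
          (mul_le_mul_of_nonneg_left (le_abs_self N) hs0.le).trans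
            (mul_le_mul_of_nonneg_right (min_le_right _ _) (abs_nonneg N))
      _ < ε := by
        rw [div_mul_eq_mul_div, div_lt_iff₀ (by positivity)]
        nlinarith [abs_nonneg N]

lemma exists_contactLocus_subset_of_holderNorm_sub_lt [CompactSpace X] (hA : Continuous A)
    (hT : Continuous T) (hu : IsSubaction T A Abar u) {W : Set X} (hW : IsOpen W)
    (huW : contactLocus T A Abar u ⊆ W) :
    ∃ ε > 0, ∀ v, Continuous v → holderNorm θ (fun x => v x - u x) < ε →
      contactLocus T A Abar v ⊆ W := by
  obtain ⟨c, hc, hcD⟩ := hW.isClosed_compl.isCompact.exists_forall_le'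
    (continuous_subactionDefect hA hT hu.1 (Abar := Abar)).continuousOn (a := 0)
    fun z hz => (hu.subactionDefect_nonneg z).lt_of_ne' fun h => hz (huW (mem_contactLocus_iff.2 h))
  refine ⟨c / 2, half_pos hc, fun v hv hvu z hz => by_contra fun hzW => ?_⟩
  have hvu' : Continuous fun x => v x - u x := hv.sub hu.1
  have h1 := (abs_le_holderNorm (θ := θ) hvu' (T z)).trans_lt hvu
  have h2 := (abs_le_holderNorm (θ := θ) hvu' z).trans_lt hvu
  have h3 := hcD z hzW
  rw [mem_contactLocus_iff] at hz
  have : subactionDefect T A Abar v z =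
      subactionDefect T A Abar u z - ((v (T z) - u (T z)) - (v z - u z)) := by
    simp only [subactionDefect]
    ring
  linarith [abs_lt.1 h1, abs_lt.1 h2]

end Genericity

theorem separating_subactions_residual_general {X : Type*} [MetricSpace X] [CompactSpace X]
    (T : X → X) (hT : IsExpandingTransitive T)
    (θ : ℝ) (hθ0 : 0 < θ) (hθ1 : θ ≤ 1)
    (A : X → ℝ) (hA : IsThetaHolder θ A)
    (Abar : ℝ) :
    ∃ G : ℕ → Set (X → ℝ),
      (∀ n : ℕ, ∀ u ∈ G n, IsThetaHolder θ u ∧ IsSubaction T A Abar u) ∧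
      (∀ n : ℕ, ∀ u ∈ G n, ∃ ε : ℝ, 0 < ε ∧
        ∀ v : X → ℝ, IsThetaHolder θ v → IsSubaction T A Abar v →
          holderNorm θ (fun x => v x - u x) < ε → v ∈ G n) ∧
      (∀ n : ℕ, ∀ u : X → ℝ, IsThetaHolder θ u → IsSubaction T A Abar u →
        ∀ ε : ℝ, 0 < ε → ∃ v ∈ G n, holderNorm θ (fun x => v x - u x) < ε) ∧
      (∀ u ∈ ⋂ n : ℕ, G n,
        contactLocus T A Abar u = nonwanderingSet T A Abar) := by
  set Ω := nonwanderingSet T A Abar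
  refine ⟨fun n => {u | IsThetaHolder θ u ∧ IsSubaction T A Abar u ∧
      contactLocus T A Abar u ⊆ thickening (1 / (n + 1)) Ω},
    fun n u hu => ⟨hu.1, hu.2.1⟩, ?_, ?_, ?_⟩
  · rintro n u ⟨-, hu, huW⟩
    obtain ⟨ε, hε, hε'⟩ := exists_contactLocus_subset_of_holderNorm_sub_lt
      (hA.continuous hθ0) hT.cont hu isOpen_thickening huW
    exact ⟨ε, hε, fun v hv1 hv hvu => ⟨hv1, hv, hε' v (hv1.continuous hθ0) hvu⟩⟩
  · intro n u hu1 hu ε hε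
    exact exists_holderNorm_sub_lt_contactLocus_subset hT hθ0 hθ1 hA hu1 hu isOpen_thickening
      (self_subset_thickening (by positivity) Ω) hε
  · intro u hu
    have hu0 := (Set.mem_iInter.1 hu 0).2.1
    refine (nonwanderingSet_subset_contactLocus (hA.continuous hθ0) hT.cont hu0).antisymm' ?_
    intro z hz
    rw [← isClosed_nonwanderingSet.closure_eq, Metric.mem_closure_iff]
    intro r hr
    obtain ⟨n, hn⟩ := exists_nat_one_div_lt hr
    obtain ⟨y, hy, hzy⟩ := mem_thickening_iff.1 ((Set.mem_iInter.1 hu n).2.2 hz)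
    exact ⟨y, hy, hzy.trans hn⟩

/-- the separating θ-Hölder sub-actions contain a countable
intersection of subsets of the θ-Hölder sub-actions, each open and dense
for the θ-Hölder topology; hence they are residual. -/
theorem separating_subactions_residual {X : Type*} [MetricSpace X] [CompactSpace X] [Nonempty X]
    [MeasurableSpace X] [BorelSpace X]
    (T : X → X) (hT : IsExpandingTransitive T)
    (θ : ℝ) (hθ0 : 0 < θ) (hθ1 : θ ≤ 1)
    (A : X → ℝ) (hA : IsThetaHolder θ A)
    (Abar : ℝ) (hAbar : IsErgMinValue T A Abar) :
    ∃ G : ℕ → Set (X → ℝ),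
      (∀ n : ℕ, ∀ u ∈ G n, IsThetaHolder θ u ∧ IsSubaction T A Abar u) ∧
      (∀ n : ℕ, ∀ u ∈ G n, ∃ ε : ℝ, 0 < ε ∧
        ∀ v : X → ℝ, IsThetaHolder θ v → IsSubaction T A Abar v →
          holderNorm θ (fun x => v x - u x) < ε → v ∈ G n) ∧
      (∀ n : ℕ, ∀ u : X → ℝ, IsThetaHolder θ u → IsSubaction T A Abar u →
        ∀ ε : ℝ, 0 < ε → ∃ v ∈ G n, holderNorm θ (fun x => v x - u x) < ε) ∧
      (∀ u ∈ ⋂ n : ℕ, G n,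
        contactLocus T A Abar u = nonwanderingSet T A Abar) :=
  separating_subactions_residual_general T hT θ hθ0 hθ1 A hA Abar
end

section
/- Let A : X → ℝ be θ-Hölder for some θ ∈ (0,1]. If u : X → ℝ is a continuous calibrated sub-action for A, then for every y ∈ X, u(y) = min_{x ∈ Ω(A)} [u(x) + h_A(x, y)], where for each x ∈ Ω(A) the value h_A(x, y) is finite and the minimum over the (nonempty compact) set Ω(A) is attained. -/
set_option maxHeartbeats 1000000

open MeasureTheory Filter Topology


namespace CalibAux

variable {X : Type*} [MetricSpace X]

lemma geom_sum_le' {r : ℝ} (h0 : 0 ≤ r) (h1 : r < 1) (n : ℕ) :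
    ∑ i ∈ Finset.range n, r ^ i ≤ (1 - r)⁻¹ := by
  have h1r : 0 < 1 - r := by linarith
  rw [geom_sum_eq h1.ne]
  have heq : (r ^ n - 1) / (r - 1) = (1 - r ^ n) / (1 - r) := by
    rw [div_eq_div_iff (by linarith) (by linarith)]; ring
  rw [heq]
  have h3 : (1 - r ^ n) ≤ 1 := by have := pow_nonneg h0 n; linarith
  calc (1 - r ^ n) / (1 - r) ≤ 1 / (1 - r) := by
        apply div_le_div₀ (by norm_num) h3 h1r le_rfl
    _ = (1 - r)⁻¹ := one_div _

lemma exists_branch [CompactSpace X] [Nonempty X] {T : X → X}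
    (hc : Continuous T) (ho : IsOpenMap T) {lam δ : ℝ} (hδ : 0 < δ)
    (hcontr : ∀ x y : X, dist x y ≤ δ → dist x y ≤ lam * dist (T x) (T y)) :
    ∃ ξ : ℝ, 0 < ξ ∧ ∀ b a : X, dist a (T b) < ξ →
      ∃ c, T c = a ∧ dist c b ≤ lam * dist a (T b) := by
  -- for each b, choose ρ b with ball (T b) (ρ b) ⊆ T '' ball b (δ/2)
  have hρ : ∀ b : X, ∃ ρ : ℝ, 0 < ρ ∧ Metric.ball (T b) ρ ⊆ T '' Metric.ball b (δ/2) := by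
    intro b
    have hopen : IsOpen (T '' Metric.ball b (δ/2)) := ho _ Metric.isOpen_ball
    have hmem : T b ∈ T '' Metric.ball b (δ/2) :=
      ⟨b, Metric.mem_ball_self (by linarith), rfl⟩
    rcases Metric.isOpen_iff.1 hopen _ hmem with ⟨ρ, hρ0, hsub⟩
    exact ⟨ρ, hρ0, hsub⟩
  choose ρ hρ0 hρsub using hρ
  -- σ b : continuity radius
  have hσ : ∀ b : X, ∃ σ : ℝ, 0 < σ ∧ σ ≤ δ/2 ∧
      ∀ b', dist b' b < σ → dist (T b') (T b) < ρ b / 2 := by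
    intro b
    rcases Metric.continuous_iff.1 hc b (ρ b / 2) (by have := hρ0 b; linarith) with ⟨s, hs0, hs⟩
    exact ⟨min s (δ/2), lt_min hs0 (by linarith), min_le_right _ _,
      fun b' hb' => hs b' (lt_of_lt_of_le hb' (min_le_left _ _))⟩
  choose σ hσ0 hσδ hσcont using hσ
  -- finite subcover
  obtain ⟨t, ht⟩ := isCompact_univ.elim_finite_subcover
    (fun b : X => Metric.ball b (σ b)) (fun b => Metric.isOpen_ball)
    (fun x _ => Set.mem_iUnion.2 ⟨x, Metric.mem_ball_self (hσ0 x)⟩)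
  have htne : t.Nonempty := by
    by_contra hne
    rw [Finset.not_nonempty_iff_eq_empty] at hne
    obtain ⟨x⟩ := ‹Nonempty X›
    have := ht (Set.mem_univ x)
    simp [hne] at this
  refine ⟨(t.image (fun b => ρ b / 2)).min' (htne.image _), ?_, ?_⟩
  · rw [Finset.lt_min'_iff]
    intro y hy
    rw [Finset.mem_image] at hy
    rcases hy with ⟨b, _, hb⟩
    rw [← hb]
    have := hρ0 b; linarith
  set ξ : ℝ := (t.image (fun b => ρ b / 2)).min' (htne.image _) with hξdef
  intro b a hab
  -- b belongs to some ball in the cover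
  have hb : b ∈ ⋃ i ∈ t, Metric.ball i (σ i) := ht (Set.mem_univ b)
  rw [Set.mem_iUnion₂] at hb
  rcases hb with ⟨i, hit, hbi⟩
  have hξρ : ξ ≤ ρ i / 2 := Finset.min'_le _ _ (Finset.mem_image_of_mem _ hit)
  have h1 : dist (T b) (T i) < ρ i / 2 := hσcont i b (Metric.mem_ball.1 hbi)
  have h2 : dist a (T i) < ρ i := by
    calc dist a (T i) ≤ dist a (T b) + dist (T b) (T i) := dist_triangle _ _ _
      _ < ξ + ρ i / 2 := by linarith
      _ ≤ ρ i := by linarith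
  have := hρsub i (Metric.mem_ball.2 h2)
  rcases this with ⟨c, hcball, hTc⟩
  have hcb : dist c b ≤ δ := by
    have h3 : dist c i < δ/2 := Metric.mem_ball.1 hcball
    have h4 : dist b i < σ i := Metric.mem_ball.1 hbi
    have h5 := hσδ i
    calc dist c b ≤ dist c i + dist i b := dist_triangle _ _ _
      _ = dist c i + dist b i := by rw [dist_comm i b]
      _ ≤ δ/2 + δ/2 := by linarith
      _ = δ := by ring
  refine ⟨c, hTc, ?_⟩
  have := hcontr c b hcb
  rw [hTc] at this
  calc dist c b ≤ lam * dist a (T b) := this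
  -- done

lemma pullback {T : X → X} {lam ξ : ℝ} (hl0 : 0 ≤ lam) (hl1 : lam < 1)
    (hbr : ∀ b a : X, dist a (T b) < ξ → ∃ c, T c = a ∧ dist c b ≤ lam * dist a (T b)) :
    ∀ (k : ℕ) (z q : X), dist q (T^[k] z) < ξ →
      ∃ z', T^[k] z' = q ∧
        ∀ j ≤ k, dist (T^[j] z') (T^[j] z) ≤ lam ^ (k - j) * dist q (T^[k] z) := by
  intro k
  induction k with
  | zero =>
    intro z q hq
    refine ⟨q, rfl, ?_⟩
    intro j hj
    interval_cases j
    simpa using hq.le.trans (by simp)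
  | succ k ih =>
    intro z q hq
    have hTk : T^[k+1] z = T (T^[k] z) := Function.iterate_succ_apply' T k z
    rw [hTk] at hq
    obtain ⟨c, hTc, hcd⟩ := hbr (T^[k] z) q hq
    have hcξ : dist c (T^[k] z) < ξ := by
      have : lam * dist q (T (T^[k] z)) ≤ dist q (T (T^[k] z)) := by
        nlinarith [dist_nonneg (x := q) (y := T (T^[k] z))]
      linarith
    obtain ⟨z', hz'k, hz'd⟩ := ih z c hcξ
    refine ⟨z', ?_, ?_⟩
    · rw [Function.iterate_succ_apply' T k z', hz'k, hTc]
    · intro j hj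
      rcases Nat.lt_or_ge j (k+1) with hjk | hjk
      · have hjk' : j ≤ k := Nat.lt_succ_iff.1 hjk
        have h1 := hz'd j hjk'
        have h2 : dist c (T^[k] z) ≤ lam * dist q (T^[k+1] z) := by rw [hTk]; exact hcd
        have h3 : lam ^ (k - j) * dist c (T^[k] z) ≤
            lam ^ (k - j) * (lam * dist q (T^[k+1] z)) := by
          apply mul_le_mul_of_nonneg_left h2 (pow_nonneg hl0 _)
        have h4 : lam ^ (k - j) * (lam * dist q (T^[k+1] z)) =
            lam ^ (k + 1 - j) * dist q (T^[k+1] z) := by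
          rw [show k + 1 - j = (k - j) + 1 by omega, pow_succ]
          ring
        calc dist (T^[j] z') (T^[j] z) ≤ lam ^ (k - j) * dist c (T^[k] z) := h1
          _ ≤ lam ^ (k + 1 - j) * dist q (T^[k+1] z) := by rw [← h4]; exact h3
      · have hj' : j = k + 1 := le_antisymm hj hjk
        subst hj'
        rw [Function.iterate_succ_apply' T k z', hz'k, hTc]
        simp

/-- Hölder sum comparison along shadowing orbits. -/
lemma sum_compare {T : X → X} {A : X → ℝ} {C lam θ : ℝ}
    (hC : 0 ≤ C) (hl0 : 0 ≤ lam) (hl1 : lam < 1) (hθ0 : 0 < θ)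
    (hA : ∀ x y : X, |A x - A y| ≤ C * dist x y ^ θ)
    {k : ℕ} {z z' : X} {d : ℝ} (hd : 0 ≤ d)
    (hsh : ∀ j ≤ k, dist (T^[j] z') (T^[j] z) ≤ lam ^ (k - j) * d) :
    |∑ j ∈ Finset.range k, A (T^[j] z') - ∑ j ∈ Finset.range k, A (T^[j] z)|
      ≤ C * d ^ θ * (1 - lam ^ θ)⁻¹ := by
  have hlθ1 : lam ^ θ < 1 := Real.rpow_lt_one hl0 hl1 hθ0
  have hlθ0 : 0 ≤ lam ^ θ := Real.rpow_nonneg hl0 θ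
  rw [← Finset.sum_sub_distrib]
  calc |∑ j ∈ Finset.range k, (A (T^[j] z') - A (T^[j] z))|
      ≤ ∑ j ∈ Finset.range k, |A (T^[j] z') - A (T^[j] z)| :=
        Finset.abs_sum_le_sum_abs _ _
    _ ≤ ∑ j ∈ Finset.range k, C * d ^ θ * (lam ^ θ) ^ (k - j) := by
        apply Finset.sum_le_sum
        intro j hj
        have hjk : j ≤ k := (Finset.mem_range.1 hj).le
        have h1 := hA (T^[j] z') (T^[j] z)
        have h2 : dist (T^[j] z') (T^[j] z) ^ θ ≤ (lam ^ (k - j) * d) ^ θ :=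
          Real.rpow_le_rpow dist_nonneg (hsh j hjk) hθ0.le
        have h3 : (lam ^ (k - j) * d) ^ θ = (lam ^ θ) ^ (k - j) * d ^ θ := by
          rw [Real.mul_rpow (pow_nonneg hl0 _) hd, ← Real.rpow_natCast lam (k - j),
            ← Real.rpow_mul hl0, mul_comm ((k - j : ℕ) : ℝ) θ, Real.rpow_mul hl0,
            Real.rpow_natCast]
        calc |A (T^[j] z') - A (T^[j] z)| ≤ C * dist (T^[j] z') (T^[j] z) ^ θ := h1
          _ ≤ C * ((lam ^ θ) ^ (k - j) * d ^ θ) := by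
              apply mul_le_mul_of_nonneg_left _ hC
              exact h2.trans_eq h3
          _ = C * d ^ θ * (lam ^ θ) ^ (k - j) := by ring
    _ ≤ C * d ^ θ * (1 - lam ^ θ)⁻¹ := by
        rw [← Finset.mul_sum]
        apply mul_le_mul_of_nonneg_left _ (by positivity)
        calc ∑ j ∈ Finset.range k, (lam ^ θ) ^ (k - j)
            ≤ ∑ j ∈ Finset.range k, (lam ^ θ) ^ (k - j) := le_rfl
          _ ≤ (1 - lam ^ θ)⁻¹ := by
              have : ∑ j ∈ Finset.range k, (lam ^ θ) ^ (k - j)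
                  = ∑ i ∈ Finset.range k, (lam ^ θ) ^ (i + 1) := by
                rw [← Finset.sum_range_reflect (fun i => (lam ^ θ) ^ (i + 1)) k]
                apply Finset.sum_congr rfl
                intro i hi
                have := Finset.mem_range.1 hi
                congr 1
                omega
              rw [this]
              calc ∑ i ∈ Finset.range k, (lam ^ θ) ^ (i + 1)
                  ≤ ∑ i ∈ Finset.range k, (lam ^ θ) ^ i := by
                    apply Finset.sum_le_sum
                    intro i _
                    exact pow_le_pow_of_le_one hlθ0 hlθ1.le (by omega)
                _ ≤ (1 - lam ^ θ)⁻¹ := geom_sum_le' hlθ0 hlθ1 k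

/-- Birkhoff sum of `A - Abar`. -/
noncomputable def birk (T : X → X) (A : X → ℝ) (Abar : ℝ) (k : ℕ) (z : X) : ℝ :=
  ∑ j ∈ Finset.range k, (A (T^[j] z) - Abar)

lemma birk_add (T : X → X) (A : X → ℝ) (Abar : ℝ) (a b : ℕ) (z : X) :
    birk T A Abar (a + b) z = birk T A Abar a z + birk T A Abar b (T^[a] z) := by
  induction b with
  | zero => simp [birk]
  | succ b ih =>
    rw [show a + (b+1) = (a+b) + 1 by omega]
    unfold birk at *
    rw [Finset.sum_range_succ, Finset.sum_range_succ, ih,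
      show T^[a+b] z = T^[b] (T^[a] z) by rw [Nat.add_comm, Function.iterate_add_apply]]
    ring

lemma birk_telescope {T : X → X} {A : X → ℝ} {Abar : ℝ} {u : X → ℝ}
    (hsub : ∀ p : X, u (T p) - u p + Abar ≤ A p) (k : ℕ) (z : X) :
    u (T^[k] z) - u z ≤ birk T A Abar k z := by
  induction k with
  | zero => simp [birk]
  | succ k ih =>
    unfold birk at *
    rw [Finset.sum_range_succ]
    have h1 := hsub (T^[k] z)
    rw [← Function.iterate_succ_apply' T k z] at h1
    linarith

lemma birk_diff (T : X → X) (A : X → ℝ) (Abar : ℝ) (k : ℕ) (z z' : X) :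
    birk T A Abar k z' - birk T A Abar k z
      = ∑ j ∈ Finset.range k, A (T^[j] z') - ∑ j ∈ Finset.range k, A (T^[j] z) := by
  unfold birk
  rw [Finset.sum_sub_distrib, Finset.sum_sub_distrib]
  ring

lemma ereal_le_of_forall_sub {c : ℝ} {x : EReal}
    (h : ∀ η : ℝ, 0 < η → ((c - η : ℝ) : EReal) ≤ x) : (c : EReal) ≤ x := by
  by_contra hc
  push_neg at hc
  obtain ⟨r, hr1, hr2⟩ := EReal.exists_between_coe_real hc
  have hη : (0:ℝ) < c - r := by exact_mod_cast sub_pos.2 (EReal.coe_lt_coe_iff.1 hr2)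
  have := h (c - r) hη
  rw [show c - (c - r) = r by ring] at this
  exact absurd (this.trans_lt hr1) (lt_irrefl _)

lemma ereal_le_of_forall_add {c : ℝ} {x : EReal}
    (h : ∀ η : ℝ, 0 < η → x ≤ ((c + η : ℝ) : EReal)) : x ≤ (c : EReal) := by
  by_contra hc
  push_neg at hc
  obtain ⟨r, hr1, hr2⟩ := EReal.exists_between_coe_real hc
  have hη : (0:ℝ) < r - c := by exact_mod_cast sub_pos.2 (EReal.coe_lt_coe_iff.1 hr1)
  have := h (r - c) hη
  rw [show c + (r - c) = r by ring] at this
  exact absurd (hr2.trans_le this) (lt_irrefl _)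

lemma ereal_exists_real {a b : ℝ} {x : EReal} (ha : (a : EReal) ≤ x) (hb : x ≤ (b : EReal)) :
    ∃ c : ℝ, x = (c : EReal) := by
  have hbot : x ≠ ⊥ := by
    intro h; rw [h] at ha; exact (EReal.bot_lt_coe a).not_ge ha
  have htop : x ≠ ⊤ := by
    intro h; rw [h] at hb; exact (EReal.coe_lt_top b).not_ge hb
  exact ⟨x.toReal, (EReal.coe_toReal htop hbot).symm⟩

lemma peierls_lower [CompactSpace X] {T : X → X} {A : X → ℝ} {Abar : ℝ} {u : X → ℝ}
    (hucont : Continuous u) (hsub : ∀ p : X, u (T p) - u p + Abar ≤ A p) (x y : X) :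
    ((u y - u x : ℝ) : EReal) ≤ peierlsBarrier T A Abar x y := by
  apply ereal_le_of_forall_sub
  intro η hη
  have huc := Metric.uniformContinuous_iff.1 (CompactSpace.uniformContinuous_of_continuous hucont)
  obtain ⟨d, hd0, hd⟩ := huc (η/2) (by linarith)
  refine le_trans ?_ (le_iSup _ (⟨d, hd0⟩ : {e : ℝ // 0 < e}))
  apply Filter.le_liminf_of_le (by isBoundedDefault)
  apply Filter.Eventually.of_forall
  intro k
  apply le_sInf
  rintro v ⟨z, hz1, hz2, rfl⟩
  rw [EReal.coe_le_coe_iff]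
  have h1 : u (T^[k] z) - u z ≤ birk T A Abar k z := birk_telescope hsub k z
  have h2 : dist (u (T^[k] z)) (u y) < η/2 := hd hz2
  have h3 : dist (u z) (u x) < η/2 := hd hz1
  rw [Real.dist_eq] at h2 h3
  have h2' := abs_lt.1 h2
  have h3' := abs_lt.1 h3
  have : birk T A Abar k z = ∑ j ∈ Finset.range k, (A (T^[j] z) - Abar) := rfl
  rw [← this]
  linarith [h1, h2'.1, h2'.2, h3'.1, h3'.2]

lemma peierls_upper [CompactSpace X] [Nonempty X]
    {T : X → X} (hT : IsExpandingTransitive T)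
    {A : X → ℝ} {C θ : ℝ} (hC : 0 ≤ C) (hθ0 : 0 < θ)
    (hA : ∀ x y : X, |A x - A y| ≤ C * dist x y ^ θ)
    (Abar : ℝ) {x : X} (hx : x ∈ nonwanderingSet T A Abar) (y : X) :
    ∃ M : ℝ, peierlsBarrier T A Abar x y ≤ (M : EReal) := by
  obtain ⟨lam, hl0, hl1, δ, hδ0, hcontr⟩ := hT.contracting
  obtain ⟨ξ, hξ0, hbr⟩ := exists_branch hT.cont hT.isOpenMap hδ0 hcontr
  have hlθ1 : lam ^ θ < 1 := Real.rpow_lt_one hl0.le hl1 hθ0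
  have hlθ0 : (0:ℝ) ≤ 1 - lam ^ θ := by linarith
  have hinv0 : (0:ℝ) ≤ (1 - lam ^ θ)⁻¹ := inv_nonneg.2 hlθ0
  -- global bound on |A z - Abar|
  obtain ⟨D, hD⟩ := Metric.isBounded_iff.1 (isCompact_univ : IsCompact (Set.univ : Set X)).isBounded
  have hD0 : (0:ℝ) ≤ D := le_trans dist_nonneg (hD (Set.mem_univ y) (Set.mem_univ y))
  set KA : ℝ := |A y - Abar| + C * D ^ θ with hKAdef
  have hKA0 : 0 ≤ KA := by positivity
  have hKAb : ∀ z : X, |A z - Abar| ≤ KA := by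
    intro z
    have h1 : |A z - A y| ≤ C * dist z y ^ θ := hA z y
    have h2 : dist z y ^ θ ≤ D ^ θ :=
      Real.rpow_le_rpow dist_nonneg (hD (Set.mem_univ z) (Set.mem_univ y)) hθ0.le
    have h3 : |A z - Abar| ≤ |A z - A y| + |A y - Abar| := by
      calc |A z - Abar| = |(A z - A y) + (A y - Abar)| := by ring_nf
        _ ≤ _ := abs_add_le _ _
    nlinarith [mul_le_mul_of_nonneg_left h2 hC]
  -- connector from near x to exactly y
  obtain ⟨n, w, hw1, hw2⟩ := hT.transitive (Metric.ball y (ξ/2)) (Metric.ball x (ξ/4))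
    Metric.isOpen_ball Metric.isOpen_ball ⟨y, Metric.mem_ball_self (by linarith)⟩
    ⟨x, Metric.mem_ball_self (by linarith)⟩
  have hwy : dist y (T^[n] w) < ξ/2 := by
    rw [dist_comm]; exact Metric.mem_ball.1 hw1
  have hwx : dist w x < ξ/4 := Metric.mem_ball.1 hw2
  obtain ⟨ct, hctn, hctd⟩ := pullback hl0.le hl1 hbr n w y (by linarith)
  have hctx : dist ct x < ξ * (3/4) := by
    have h1 := hctd 0 (Nat.zero_le n)
    simp only [Function.iterate_zero_apply] at h1
    have h2 : lam ^ (n - 0) * dist y (T^[n] w) ≤ 1 * (ξ/2) :=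
      mul_le_mul (pow_le_one₀ hl0.le hl1.le) hwy.le dist_nonneg zero_le_one
    calc dist ct x ≤ dist ct w + dist w x := dist_triangle _ _ _
      _ < ξ/2 + ξ/4 := by rw [one_mul] at h2; linarith
      _ = ξ * (3/4) := by ring
  have hctS : birk T A Abar n ct ≤ (n : ℝ) * KA := by
    unfold birk
    calc ∑ j ∈ Finset.range n, (A (T^[j] ct) - Abar)
        ≤ ∑ j ∈ Finset.range n, KA := by
          apply Finset.sum_le_sum
          intro j _
          exact (le_abs_self _).trans (hKAb _)
      _ = (n : ℝ) * KA := by rw [Finset.sum_const, Finset.card_range, nsmul_eq_mul]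
  set Egl : ℝ := C * ξ ^ θ * (1 - lam ^ θ)⁻¹ with hEgldef
  refine ⟨1 + Egl + (n : ℝ) * KA, ?_⟩
  apply iSup_le
  rintro ⟨ε, hε⟩
  apply Filter.liminf_le_of_frequently_le'
  rw [Filter.frequently_atTop]
  intro K
  -- choose m₀ with lam ^ m₀ * ξ < ε / 2
  obtain ⟨m₀, hm₀⟩ := exists_pow_lt_of_lt_one (show (0:ℝ) < ε/(2*ξ) by positivity) hl1
  have hm₀' : lam ^ m₀ * ξ < ε / 2 := by
    rw [show ε/2 = (ε/(2*ξ)) * ξ by field_simp]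
    exact mul_lt_mul_of_pos_right hm₀ hξ0
  set m : ℕ := max (max K m₀) 1 with hmdef
  have hm1 : 1 ≤ m := le_max_right _ _
  have hmK : K ≤ m := le_trans (le_max_left _ _) (le_max_left _ _)
  have hmm₀ : m₀ ≤ m := le_trans (le_max_right K m₀) (le_max_left _ _)
  set β : ℝ := (1 + lam)/(1 - lam) with hβdef
  have hβ1 : 1 ≤ β := by
    rw [hβdef, le_div_iff₀ (by linarith)]; linarith
  -- choose ε'
  have hc1 : ContinuousAt (fun t : ℝ => (1+β)*t) 0 := by fun_prop
  have hc12 : ContinuousAt (fun t : ℝ => ((1+β)*t) ^ θ) 0 :=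
    hc1.rpow_const (Or.inr hθ0.le)
  have hc3 : ContinuousAt
      (fun t : ℝ => (m:ℝ) * (t + C * ((1+β)*t) ^ θ * (1 - lam ^ θ)⁻¹)) 0 := by
    apply ContinuousAt.mul continuousAt_const
    apply ContinuousAt.add continuousAt_id
    exact (continuousAt_const.mul hc12).mul continuousAt_const
  have htend : Filter.Tendsto
      (fun t : ℝ => (m:ℝ) * (t + C * ((1+β)*t) ^ θ * (1 - lam ^ θ)⁻¹)) (𝓝 0) (𝓝 0) := by
    simpa [Real.zero_rpow hθ0.ne'] using hc3.tendsto
  have hβpos : (0:ℝ) < 1 + β := by linarith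
  set c₀ : ℝ := min (ξ/5) (ε/2) / (1+β) with hc₀def
  have hc₀pos : 0 < c₀ :=
    div_pos (lt_min (by positivity) (by positivity)) hβpos
  have hev1 : ∀ᶠ t in 𝓝[>] (0:ℝ),
      (m:ℝ) * (t + C * ((1+β)*t) ^ θ * (1 - lam ^ θ)⁻¹) < 1 :=
    ((htend.mono_left nhdsWithin_le_nhds).eventually_lt_const one_pos)
  have hev2 : ∀ᶠ t in 𝓝[>] (0:ℝ), t < c₀ :=
    ((tendsto_id.mono_left nhdsWithin_le_nhds).eventually_lt_const hc₀pos)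
  have hev3 : ∀ᶠ t in 𝓝[>] (0:ℝ), (0:ℝ) < t :=
    eventually_mem_nhdsWithin.mono fun t ht => Set.mem_Ioi.1 ht
  obtain ⟨ε', hεF, hεc₀, hεpos⟩ := (hev1.and (hev2.and hev3)).exists
  set ε₂ : ℝ := β * ε' with hε₂def
  have hε₂id : lam * (ε' + ε₂) + ε' = ε₂ := by
    have hne : (1:ℝ) - lam ≠ 0 := by linarith
    rw [hε₂def, hβdef]
    field_simp
    ring
  have hε'ε₂ : ε' ≤ ε₂ := by nlinarith
  have hε₂0 : 0 ≤ ε₂ := le_trans hεpos.le hε'ε₂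
  have hsum12 : ε' + ε₂ = (1+β)*ε' := by rw [hε₂def]; ring
  have h15 : (1+β)*ε' < min (ξ/5) (ε/2) := by
    rw [hc₀def, lt_div_iff₀ hβpos] at hεc₀
    calc (1+β)*ε' = ε'*(1+β) := mul_comm _ _
      _ < _ := hεc₀
  have hltξ : ε' + ε₂ < ξ/5 := by
    rw [hsum12]; exact h15.trans_le (min_le_left _ _)
  have hltε : ε' + ε₂ < ε/2 := by
    rw [hsum12]; exact h15.trans_le (min_le_right _ _)
  -- loop from the nonwandering property
  obtain ⟨k₁, hk₁, y₁, hy₁x, hy₁T, hy₁S⟩ := hx ε' hεpos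
  have hy₁S' : |birk T A Abar k₁ y₁| < ε' := hy₁S
  set Err : ℝ := C * (ε' + ε₂) ^ θ * (1 - lam ^ θ)⁻¹ with hErrdef
  have hErr0 : 0 ≤ Err :=
    mul_nonneg (mul_nonneg hC (Real.rpow_nonneg (by linarith) θ)) hinv0
  have hεErr : (m:ℝ) * (ε' + Err) < 1 := by
    rw [← hsum12] at hεF
    rw [hErrdef]
    exact hεF
  -- the loop block
  have hblock : ∀ j : ℕ, ∃ z : X, dist z x ≤ ε₂ ∧ T^[(j+1) * k₁] z = T^[k₁] y₁ ∧
      birk T A Abar ((j+1) * k₁) z ≤ ((j:ℝ)+1) * (ε' + Err) := by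
    intro j
    induction j with
    | zero =>
      refine ⟨y₁, ?_, by norm_num, ?_⟩
      · rw [dist_comm]; exact hy₁x.le.trans hε'ε₂
      · have h6 := (abs_lt.1 hy₁S').2
        norm_num
        linarith
    | succ j ih =>
      obtain ⟨z, hzx, hzT, hzS⟩ := ih
      have hxT : dist x (T^[k₁] y₁) < ε' := hy₁T
      have hgap : dist z (T^[k₁] y₁) < ξ := by
        calc dist z (T^[k₁] y₁) ≤ dist z x + dist x (T^[k₁] y₁) := dist_triangle _ _ _
          _ < ε₂ + ε' := by linarith
          _ < ξ := by linarith
      obtain ⟨z', hz'T, hz'd⟩ := pullback hl0.le hl1 hbr k₁ y₁ z hgap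
      have hd0 : (0:ℝ) ≤ dist z (T^[k₁] y₁) := dist_nonneg
      have hdle : dist z (T^[k₁] y₁) ≤ ε' + ε₂ := by
        have := dist_triangle z x (T^[k₁] y₁); linarith
      have hstart : dist z' x ≤ ε₂ := by
        have h0 := hz'd 0 (Nat.zero_le k₁)
        simp only [Function.iterate_zero_apply] at h0
        have hk : lam ^ (k₁ - 0) ≤ lam := by
          rw [Nat.sub_zero]
          calc lam ^ k₁ ≤ lam ^ 1 := pow_le_pow_of_le_one hl0.le hl1.le hk₁
            _ = lam := pow_one lam
        have h1 : lam ^ (k₁ - 0) * dist z (T^[k₁] y₁) ≤ lam * (ε' + ε₂) :=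
          mul_le_mul hk hdle hd0 hl0.le
        have h2 : dist y₁ x ≤ ε' := by rw [dist_comm]; exact hy₁x.le
        calc dist z' x ≤ dist z' y₁ + dist y₁ x := dist_triangle _ _ _
          _ ≤ lam * (ε' + ε₂) + ε' := by linarith
          _ = ε₂ := hε₂id
      refine ⟨z', hstart, ?_, ?_⟩
      · rw [show (j+1+1)*k₁ = (j+1)*k₁ + k₁ by ring]
        rw [Function.iterate_add_apply, hz'T, hzT]
      · rw [show (j+1+1)*k₁ = k₁ + (j+1)*k₁ by ring, birk_add, hz'T]
        have hcomp : |∑ i ∈ Finset.range k₁, A (T^[i] z') - ∑ i ∈ Finset.range k₁, A (T^[i] y₁)|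
            ≤ C * dist z (T^[k₁] y₁) ^ θ * (1 - lam ^ θ)⁻¹ :=
          sum_compare hC hl0.le hl1 hθ0 hA hd0 hz'd
        have hErrle : C * dist z (T^[k₁] y₁) ^ θ * (1 - lam ^ θ)⁻¹ ≤ Err := by
          rw [hErrdef]
          apply mul_le_mul_of_nonneg_right _ hinv0
          apply mul_le_mul_of_nonneg_left _ hC
          exact Real.rpow_le_rpow hd0 hdle hθ0.le
        have hdiff : birk T A Abar k₁ z' - birk T A Abar k₁ y₁
            = ∑ i ∈ Finset.range k₁, A (T^[i] z') - ∑ i ∈ Finset.range k₁, A (T^[i] y₁) :=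
          birk_diff T A Abar k₁ y₁ z'
        have h6 := (abs_lt.1 hy₁S').2
        have h7 := (abs_le.1 (hcomp.trans hErrle)).2
        push_cast
        push_cast at hzS
        linarith
  obtain ⟨zB, hzBx, hzBT, hzBS⟩ := hblock (m - 1)
  have hm' : (m - 1 + 1) = m := Nat.succ_pred_eq_of_pos hm1
  rw [hm'] at hzBT hzBS
  have hcast : ((m-1 : ℕ):ℝ) + 1 = (m:ℝ) := by
    rw [Nat.cast_sub hm1]; norm_num
  rw [hcast] at hzBS
  have hzBS'' : birk T A Abar (m * k₁) zB ≤ 1 :=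
    hzBS.trans hεErr.le
  -- final glue onto the connector
  have hgapf : dist ct (T^[m * k₁] zB) < ξ := by
    rw [hzBT]
    calc dist ct (T^[k₁] y₁) ≤ dist ct x + dist x (T^[k₁] y₁) := dist_triangle _ _ _
      _ < ξ*(3/4) + ε' := by linarith [hy₁T]
      _ ≤ ξ := by linarith
  obtain ⟨zf, hzfT, hzfd⟩ := pullback hl0.le hl1 hbr (m*k₁) zB ct hgapf
  set k := m * k₁ + n with hkdef
  have hkK : K ≤ k :=
    le_trans hmK (le_trans (Nat.le_mul_of_pos_right m hk₁) (Nat.le_add_right _ _))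
  have hTk : T^[k] zf = y := by
    rw [hkdef, Nat.add_comm, Function.iterate_add_apply, hzfT, hctn]
  have hstartf : dist zf x < ε := by
    have h0 := hzfd 0 (Nat.zero_le _)
    simp only [Function.iterate_zero_apply, Nat.sub_zero] at h0
    have h1 : lam ^ (m*k₁) * dist ct (T^[m*k₁] zB) ≤ lam ^ m₀ * ξ := by
      apply mul_le_mul _ hgapf.le dist_nonneg (pow_nonneg hl0.le _)
      exact pow_le_pow_of_le_one hl0.le hl1.le
        (le_trans hmm₀ (Nat.le_mul_of_pos_right m hk₁))
    calc dist zf x ≤ dist zf zB + dist zB x := dist_triangle _ _ _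
      _ ≤ lam ^ m₀ * ξ + ε₂ := by linarith
      _ < ε/2 + ε/2 := by linarith [hm₀']
      _ = ε := by ring
  have hsumf : birk T A Abar k zf ≤ 1 + Egl + (n:ℝ) * KA := by
    rw [hkdef, birk_add, hzfT]
    have hcomp := sum_compare hC hl0.le hl1 hθ0 hA
      (dist_nonneg (x := ct) (y := T^[m*k₁] zB)) hzfd
    have h8 : C * dist ct (T^[m*k₁] zB) ^ θ * (1-lam^θ)⁻¹ ≤ Egl := by
      rw [hEgldef]
      apply mul_le_mul_of_nonneg_right _ hinv0
      apply mul_le_mul_of_nonneg_left _ hC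
      exact Real.rpow_le_rpow dist_nonneg hgapf.le hθ0.le
    have hdiff := birk_diff T A Abar (m*k₁) zB zf
    have h9 := (abs_le.1 (hcomp.trans h8)).2
    linarith [hzBS'', hctS]
  have hmem : ((birk T A Abar k zf : ℝ) : EReal) ∈ {v : EReal | ∃ z : X,
      dist z x < ε ∧ dist (T^[k] z) y < ε ∧
      v = ((∑ j ∈ Finset.range k, (A (T^[j] z) - Abar) : ℝ) : EReal)} :=
    ⟨zf, hstartf, by rw [hTk]; simpa using hε, rfl⟩
  refine ⟨k, hkK, ?_⟩
  calc birkhoffInf T A Abar ε x y k ≤ _ := sInf_le hmem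
    _ ≤ ((1 + Egl + (n:ℝ) * KA : ℝ) : EReal) := EReal.coe_le_coe_iff.2 hsumf

end CalibAux

/-- representation of calibrated sub-actions via the Peierls
barrier: `u y = min_{x ∈ Ω(A)} [u x + h_A(x, y)]`, the barrier being finite
on `Ω(A) × X` and the minimum attained. -/
theorem calibrated_eq_min_over_nonwandering {X : Type*} [MetricSpace X] [CompactSpace X] [Nonempty X]
    [MeasurableSpace X] [BorelSpace X]
    (T : X → X) (hT : IsExpandingTransitive T)
    (θ : ℝ) (hθ0 : 0 < θ) (hθ1 : θ ≤ 1)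
    (A : X → ℝ) (hA : IsThetaHolder θ A)
    (Abar : ℝ) (hAbar : IsErgMinValue T A Abar)
    (u : X → ℝ) (hu : IsCalibrated T A Abar u) :
    ∀ y : X,
      (∀ x ∈ nonwanderingSet T A Abar,
        ∃ c : ℝ, peierlsBarrier T A Abar x y = (c : EReal)) ∧
      IsLeast {v : ℝ | ∃ x ∈ nonwanderingSet T A Abar,
        (v : EReal) = (u x : EReal) + peierlsBarrier T A Abar x y} (u y) := by
  classical
  open CalibAux in
  obtain ⟨C, hC, hA'⟩ := hA
  have hucont := hu.1
  have hsub : ∀ p : X, u (T p) - u p + Abar ≤ A p := by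
    intro p
    have := (hu.2 (T p)).1 p rfl
    linarith
  intro y
  -- backward calibrated orbit of y
  have hchoice : ∀ p : X, ∃ q : X, T q = p ∧ u p = u q + A q - Abar := fun p => (hu.2 p).2
  choose g hg1 hg2 using hchoice
  set seq : ℕ → X := fun k => g^[k] y with hseqdef
  have hseq0 : seq 0 = y := rfl
  have hseqsucc : ∀ k, seq (k+1) = g (seq k) := fun k => Function.iterate_succ_apply' g k y
  have hseqT : ∀ j m : ℕ, T^[j] (seq (m + j)) = seq m := by
    intro j
    induction j with
    | zero => intro m; simp
    | succ j ih =>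
      intro m
      rw [show m + (j+1) = (m+j) + 1 by omega, Function.iterate_succ_apply, hseqsucc, hg1]
      exact ih m
  have hseqSum : ∀ j m : ℕ, CalibAux.birk T A Abar j (seq (m + j))
      = u (seq m) - u (seq (m + j)) := by
    intro j
    induction j with
    | zero => intro m; simp [CalibAux.birk]
    | succ j ih =>
      intro m
      rw [show m + (j+1) = (m+j) + 1 by omega]
      have e1 : T^[1] (seq ((m+j)+1)) = seq (m+j) := by
        rw [Function.iterate_one, hseqsucc, hg1]
      have e2 : CalibAux.birk T A Abar 1 (seq ((m+j)+1)) = A (seq ((m+j)+1)) - Abar := by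
        simp [CalibAux.birk]
      have e3 := hg2 (seq (m+j))
      rw [← hseqsucc] at e3
      rw [show j+1 = 1+j by omega, CalibAux.birk_add, e1, e2, ih m]
      linarith
  obtain ⟨xs, -, φ, hφmono, hφtend⟩ :=
    isCompact_univ.tendsto_subseq (fun n => Set.mem_univ (seq n))
  have huc := Metric.uniformContinuous_iff.1
    (CompactSpace.uniformContinuous_of_continuous hucont)
  -- xs is non-wandering
  have hxsΩ : xs ∈ nonwanderingSet T A Abar := by
    intro ε hε
    obtain ⟨d, hd0, hd⟩ := huc (ε/2) (by linarith)
    have hr0 : 0 < min ε d := lt_min hε hd0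
    obtain ⟨N, hN⟩ := (Metric.tendsto_atTop.1 hφtend) (min ε d) hr0
    have h1 := hN N le_rfl
    have h2 := hN (N+1) (by omega)
    simp only [Function.comp_apply] at h1 h2
    have hφlt : φ N < φ (N+1) := hφmono (by omega)
    refine ⟨φ (N+1) - φ N, by omega, seq (φ (N+1)), ?_, ?_, ?_⟩
    · rw [dist_comm]; exact lt_of_lt_of_le h2 (min_le_left _ _)
    · have hT' : T^[φ (N+1) - φ N] (seq (φ (N+1))) = seq (φ N) := by
        have := hseqT (φ (N+1) - φ N) (φ N)
        rw [show φ N + (φ (N+1) - φ N) = φ (N+1) by omega] at this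
        exact this
      rw [hT', dist_comm]
      exact lt_of_lt_of_le h1 (min_le_left _ _)
    · have hS : CalibAux.birk T A Abar (φ (N+1) - φ N) (seq (φ (N+1)))
          = u (seq (φ N)) - u (seq (φ (N+1))) := by
        have := hseqSum (φ (N+1) - φ N) (φ N)
        rw [show φ N + (φ (N+1) - φ N) = φ (N+1) by omega] at this
        exact this
      have hu1 : dist (u (seq (φ N))) (u xs) < ε/2 :=
        hd (lt_of_lt_of_le h1 (min_le_right _ _))
      have hu2 : dist (u (seq (φ (N+1)))) (u xs) < ε/2 :=
        hd (lt_of_lt_of_le h2 (min_le_right _ _))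
      rw [Real.dist_eq] at hu1 hu2
      show |CalibAux.birk T A Abar (φ (N+1) - φ N) (seq (φ (N+1)))| < ε
      rw [hS]
      have a1 := abs_lt.1 hu1
      have a2 := abs_lt.1 hu2
      rw [abs_lt]
      constructor <;> linarith [a1.1, a1.2, a2.1, a2.2]
  -- upper bound at xs
  have hupper : peierlsBarrier T A Abar xs y ≤ ((u y - u xs : ℝ) : EReal) := by
    apply CalibAux.ereal_le_of_forall_add
    intro η hη
    apply iSup_le
    rintro ⟨ε, hε⟩
    apply Filter.liminf_le_of_frequently_le'
    rw [Filter.frequently_atTop]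
    intro K
    obtain ⟨d, hd0, hd⟩ := huc η hη
    have hr0 : 0 < min ε d := lt_min hε hd0
    obtain ⟨N, hN⟩ := (Metric.tendsto_atTop.1 hφtend) (min ε d) hr0
    have hφi : K ≤ φ (max N K) := le_trans (le_max_right N K) (hφmono.le_apply)
    have hdi := hN (max N K) (le_max_left N K)
    simp only [Function.comp_apply] at hdi
    refine ⟨φ (max N K), hφi, ?_⟩
    have hTki : T^[φ (max N K)] (seq (φ (max N K))) = y := by
      have := hseqT (φ (max N K)) 0
      rw [Nat.zero_add] at this
      rw [this, hseq0]
    have hmem : ((CalibAux.birk T A Abar (φ (max N K)) (seq (φ (max N K))) : ℝ) : EReal)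
        ∈ {v : EReal | ∃ z : X, dist z xs < ε ∧ dist (T^[φ (max N K)] z) y < ε ∧
          v = ((∑ j ∈ Finset.range (φ (max N K)), (A (T^[j] z) - Abar) : ℝ) : EReal)} :=
      ⟨seq (φ (max N K)), lt_of_lt_of_le hdi (min_le_left _ _),
        by rw [hTki]; simpa using hε, rfl⟩
    calc birkhoffInf T A Abar ε xs y (φ (max N K)) ≤ _ := sInf_le hmem
      _ ≤ ((u y - u xs + η : ℝ) : EReal) := by
          rw [EReal.coe_le_coe_iff]
          have hS : CalibAux.birk T A Abar (φ (max N K)) (seq (φ (max N K)))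
              = u y - u (seq (φ (max N K))) := by
            have := hseqSum (φ (max N K)) 0
            rw [Nat.zero_add, hseq0] at this
            exact this
          have hu1 : dist (u (seq (φ (max N K)))) (u xs) < η :=
            hd (lt_of_lt_of_le hdi (min_le_right _ _))
          rw [Real.dist_eq] at hu1
          have a1 := abs_lt.1 hu1
          rw [hS]
          linarith [a1.1, a1.2]
  have hlow : ∀ x : X, ((u y - u x : ℝ) : EReal) ≤ peierlsBarrier T A Abar x y :=
    fun x => CalibAux.peierls_lower hucont hsub x y
  have hfin : ∀ x ∈ nonwanderingSet T A Abar,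
      ∃ c : ℝ, peierlsBarrier T A Abar x y = (c : EReal) := by
    intro x hx
    obtain ⟨M, hM⟩ := CalibAux.peierls_upper hT hC hθ0 hA' Abar hx y
    exact CalibAux.ereal_exists_real (hlow x) hM
  have hxs_eq : peierlsBarrier T A Abar xs y = ((u y - u xs : ℝ) : EReal) :=
    le_antisymm hupper (hlow xs)
  refine ⟨hfin, ⟨xs, hxsΩ, ?_⟩, ?_⟩
  · rw [hxs_eq, ← EReal.coe_add]
    norm_num
  · rintro v ⟨x, hxΩ, hv⟩
    obtain ⟨c, hc⟩ := hfin x hxΩ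
    rw [hc, ← EReal.coe_add] at hv
    have hvc : v = u x + c := by exact_mod_cast hv
    have h2 : ((u y - u x : ℝ) : EReal) ≤ (c : EReal) := by
      rw [← hc]; exact hlow x
    have h3 := EReal.coe_le_coe_iff.1 h2
    rw [hvc]
    linarith
end

section
/- Let A : X → ℝ be θ-Hölder for some θ ∈ (0,1] and assume Ω(A) is the disjoint union of finitely many irreducible components C_1, …, C_r; fix x_i ∈ C_i for each i. If u is a continuous calibrated sub-action for A and u_i := u(x_i), then (u_1, …, u_r) belongs to the sub-action constraint set C_A(x_1, …, x_r) and u(x) = min_{1 ≤ i ≤ r} [u(x_i) + h_A(x_i, x)] for every x ∈ X. -/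
open MeasureTheory Filter Topology

section Helpers

variable {X : Type*} [MetricSpace X]

lemma ereal_coe_le_of_sub {r : ℝ} {P : EReal}
    (h : ∀ η : ℝ, 0 < η → ((r - η : ℝ) : EReal) ≤ P) : (r : EReal) ≤ P := by
  refine le_of_forall_lt fun c hc => ?_
  induction c using EReal.rec with
  | bot => exact lt_of_lt_of_le (EReal.bot_lt_coe (r - 1)) (h 1 one_pos)
  | coe s =>
    have hs : s < r := by exact_mod_cast hc
    refine lt_of_lt_of_le ?_ (h ((r - s) / 2) (by linarith))
    exact_mod_cast (by linarith : s < r - (r - s) / 2)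
  | top => exact absurd hc (not_lt.mpr le_top)

lemma birkhoffInf_ge {T : X → X} {A : X → ℝ} {Abar c ε : ℝ} {x x' : X} {k : ℕ}
    (h : ∀ z : X, dist z x < ε → dist (T^[k] z) x' < ε →
      c ≤ ∑ j ∈ Finset.range k, (A (T^[j] z) - Abar)) :
    (c : EReal) ≤ birkhoffInf T A Abar ε x x' k := by
  refine le_sInf ?_
  rintro v ⟨z, h1, h2, rfl⟩
  exact_mod_cast h z h1 h2

lemma birkhoffInf_le {T : X → X} {A : X → ℝ} {Abar ε : ℝ} {x x' : X} {k : ℕ}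
    (z : X) (h1 : dist z x < ε) (h2 : dist (T^[k] z) x' < ε) :
    birkhoffInf T A Abar ε x x' k ≤
      ((∑ j ∈ Finset.range k, (A (T^[j] z) - Abar) : ℝ) : EReal) :=
  sInf_le ⟨z, h1, h2, rfl⟩

/-- uniform continuity of u in convenient form -/
lemma unif_cont [CompactSpace X] {u : X → ℝ} (hu : Continuous u) (η : ℝ) (hη : 0 < η) :
    ∃ ε : ℝ, 0 < ε ∧ ∀ p q : X, dist p q < ε → |u p - u q| < η := by
  have := Metric.uniformContinuous_iff.mp (CompactSpace.uniformContinuous_of_continuous hu) η hη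
  obtain ⟨ε, hε, h⟩ := this
  exact ⟨ε, hε, fun p q hpq => by rw [← Real.dist_eq]; exact h hpq⟩

/-- Birkhoff sums dominate increments of a sub-action. -/
lemma sum_ge_sub {T : X → X} {A : X → ℝ} {Abar : ℝ} {u : X → ℝ}
    (hsub : ∀ y : X, u (T y) - u y + Abar ≤ A y) (z : X) (k : ℕ) :
    u (T^[k] z) - u z ≤ ∑ j ∈ Finset.range k, (A (T^[j] z) - Abar) := by
  have : ∀ j ∈ Finset.range k,
      u (T^[j+1] z) - u (T^[j] z) ≤ A (T^[j] z) - Abar := by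
    intro j _
    have := hsub (T^[j] z)
    rw [← Function.iterate_succ_apply' T j z] at this
    linarith
  calc u (T^[k] z) - u z
      = ∑ j ∈ Finset.range k, (u (T^[j+1] z) - u (T^[j] z)) := by
        rw [Finset.sum_range_sub (fun j => u (T^[j] z)) k]; simp
    _ ≤ _ := Finset.sum_le_sum this

/-- L1: the Peierls barrier dominates increments of a continuous sub-action. -/
lemma peierls_ge_sub [CompactSpace X] {T : X → X} {A : X → ℝ} {Abar : ℝ} {u : X → ℝ}
    (hucont : Continuous u) (hsub : ∀ y : X, u (T y) - u y + Abar ≤ A y) (a b : X) :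
    ((u b - u a : ℝ) : EReal) ≤ peierlsBarrier T A Abar a b := by
  refine ereal_coe_le_of_sub fun η hη => ?_
  obtain ⟨ε, hε, hu2⟩ := unif_cont hucont (η / 2) (by linarith)
  refine le_trans ?_ (le_iSup _ (⟨ε, hε⟩ : {e : ℝ // 0 < e}))
  refine Filter.le_liminf_of_le (by isBoundedDefault) (Filter.Eventually.of_forall fun k => ?_)
  refine birkhoffInf_ge fun z h1 h2 => ?_
  have e1 : |u z - u a| < η / 2 := hu2 z a h1
  have e2 : |u (T^[k] z) - u b| < η / 2 := hu2 _ b h2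
  have := sum_ge_sub hsub z k
  have h1' := abs_lt.mp e1
  have h2' := abs_lt.mp e2
  linarith [h1'.1, h1'.2, h2'.1, h2'.2]

end Helpers
section Branch
set_option linter.unusedSectionVars false

variable {X : Type*} [MetricSpace X]

/-- Uniform inverse branch lemma. -/
lemma inverse_branch [CompactSpace X] {T : X → X} (hT : IsExpandingTransitive T)
    {lam δ : ℝ} (hlam0 : 0 < lam) (hlam1 : lam < 1) (hδ : 0 < δ)
    (hc : ∀ x y : X, dist x y ≤ δ → dist x y ≤ lam * dist (T x) (T y)) :
    ∃ ρ : ℝ, 0 < ρ ∧ ∀ p q : X, dist q (T p) < ρ →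
      ∃ p', T p' = q ∧ dist p' p ≤ lam * dist q (T p) := by
  have claim : ∃ ρ : ℝ, 0 < ρ ∧ ∀ p : X,
      Metric.ball (T p) ρ ⊆ T '' Metric.ball p (δ / 2) := by
    by_contra hcon
    push_neg at hcon
    have H : ∀ n : ℕ, ∃ p q : X, dist q (T p) < 1 / (n + 1) ∧
        q ∉ T '' Metric.ball p (δ / 2) := by
      intro n
      obtain ⟨p, hp⟩ := hcon (1 / (n + 1)) (by positivity)
      obtain ⟨q, hq1, hq2⟩ := Set.not_subset.mp hp
      exact ⟨p, q, Metric.mem_ball.mp hq1, hq2⟩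
    choose p q hd hq using H
    obtain ⟨pb, -, φ, hφ, hconv⟩ := IsCompact.tendsto_subseq isCompact_univ
      (fun n => Set.mem_univ (p n))
    have hTconv : Filter.Tendsto (fun n => T (p (φ n))) Filter.atTop (nhds (T pb)) :=
      ((hT.cont.tendsto pb).comp hconv)
    have haux : Filter.Tendsto (fun n => dist (q (φ n)) (T (p (φ n)))) Filter.atTop (nhds 0) := by
      refine squeeze_zero (fun n => dist_nonneg) (fun n => ?_)
        tendsto_one_div_add_atTop_nhds_zero_nat
      refine le_of_lt (lt_of_lt_of_le (hd (φ n)) ?_)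
      have : (n : ℝ) + 1 ≤ (φ n : ℝ) + 1 := by
        have h : n ≤ φ n := hφ.le_apply; have : (n:ℝ) ≤ (φ n : ℝ) := by exact_mod_cast h
        linarith
      exact one_div_le_one_div_of_le (by positivity) this
    have hqconv : Filter.Tendsto (fun n => q (φ n)) Filter.atTop (nhds (T pb)) := by
      rw [tendsto_iff_dist_tendsto_zero]
      have hsum := haux.add (tendsto_iff_dist_tendsto_zero.mp hTconv)
      rw [add_zero] at hsum
      exact squeeze_zero (fun n => dist_nonneg)
        (fun n => dist_triangle (q (φ n)) (T (p (φ n))) (T pb)) hsum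
    have hO : IsOpen (T '' Metric.ball pb (δ / 4)) :=
      hT.isOpenMap _ Metric.isOpen_ball
    have hmem : T pb ∈ T '' Metric.ball pb (δ / 4) :=
      ⟨pb, Metric.mem_ball_self (by linarith), rfl⟩
    have ev1 : ∀ᶠ n in Filter.atTop, q (φ n) ∈ T '' Metric.ball pb (δ / 4) :=
      hqconv.eventually (hO.mem_nhds hmem)
    have ev2 : ∀ᶠ n in Filter.atTop, dist (p (φ n)) pb < δ / 4 := by
      have := Metric.tendsto_nhds.mp hconv (δ / 4) (by linarith)
      exact this
    obtain ⟨n, h1, h2⟩ := (ev1.and ev2).exists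
    obtain ⟨w, hw1, hw2⟩ := h1
    refine hq (φ n) ⟨w, ?_, hw2⟩
    have : dist w (p (φ n)) ≤ dist w pb + dist pb (p (φ n)) := dist_triangle _ _ _
    rw [Metric.mem_ball]
    rw [Metric.mem_ball] at hw1
    rw [dist_comm] at h2
    linarith
  obtain ⟨ρ, hρ, hball⟩ := claim
  refine ⟨ρ, hρ, fun p q hpq => ?_⟩
  obtain ⟨p', hp'1, hp'2⟩ := hball p (Metric.mem_ball.mpr hpq)
  rw [Metric.mem_ball] at hp'1
  refine ⟨p', hp'2, ?_⟩
  have : dist p' p ≤ δ := by linarith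
  calc dist p' p ≤ lam * dist (T p') (T p) := hc p' p this
    _ = lam * dist q (T p) := by rw [hp'2]

/-- Iterated inverse branch: shadowing a finite orbit. -/
lemma shadow {T : X → X} {lam ρ : ℝ} (hlam0 : 0 < lam) (hlam1 : lam < 1)
    (hbr : ∀ p q : X, dist q (T p) < ρ →
      ∃ p', T p' = q ∧ dist p' p ≤ lam * dist q (T p)) :
    ∀ (k : ℕ) (z w : X), dist w (T^[k] z) < ρ →
      ∃ z', T^[k] z' = w ∧ ∀ j, j ≤ k →
        dist (T^[j] z') (T^[j] z) ≤ lam ^ (k - j) * dist w (T^[k] z) := by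
  intro k
  induction k with
  | zero =>
    intro z w h
    exact ⟨w, rfl, fun j hj => by
      interval_cases j
      simpa using le_refl (dist w z)⟩
  | succ k ih =>
    intro z w h
    rw [Function.iterate_succ_apply] at h
    obtain ⟨v, hv1, hv2⟩ := ih (T z) w h
    set d := dist w (T^[k] (T z)) with hd
    have hd0 : 0 ≤ d := dist_nonneg
    have hvz : dist v (T z) ≤ lam ^ k * d := by simpa using hv2 0 (Nat.zero_le k)
    have hvρ : dist v (T z) < ρ := by
      have h1 : lam ^ k * d ≤ d :=
        mul_le_of_le_one_left hd0 (pow_le_one₀ hlam0.le hlam1.le)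
      linarith
    obtain ⟨z', hz'1, hz'2⟩ := hbr z v hvρ
    have hz'z : dist z' z ≤ lam ^ (k + 1) * d := by
      calc dist z' z ≤ lam * dist v (T z) := hz'2
        _ ≤ lam * (lam ^ k * d) := by
            exact mul_le_mul_of_nonneg_left hvz hlam0.le
        _ = lam ^ (k + 1) * d := by ring
    refine ⟨z', ?_, ?_⟩
    · rw [Function.iterate_succ_apply, hz'1, hv1]
    · intro j hj
      match j with
      | 0 =>
        simp [Function.iterate_succ_apply]; simpa using hz'z
      | (i + 1) =>
        have hik : i ≤ k := Nat.succ_le_succ_iff.mp hj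
        have := hv2 i hik
        rw [Function.iterate_succ_apply, Function.iterate_succ_apply, hz'1]
        rw [Function.iterate_succ_apply]
        simpa [Nat.succ_sub_succ] using this

end Branch
section Holder
set_option linter.unusedSectionVars false

variable {X : Type*} [MetricSpace X]

lemma geom_tail_sum {μ : ℝ} (hμ0 : 0 ≤ μ) (hμ1 : μ < 1) (k : ℕ) :
    ∑ j ∈ Finset.range k, μ ^ (k - j) ≤ 1 / (1 - μ) := by
  have h1 : ∑ j ∈ Finset.range k, μ ^ (k - j) ≤ ∑ j ∈ Finset.range k, μ ^ j := by
    have := Finset.sum_range_reflect (fun i => μ ^ (i + 1)) k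
    have heq : ∑ j ∈ Finset.range k, μ ^ (k - j)
        = ∑ j ∈ Finset.range k, μ ^ (k - 1 - j + 1) := by
      refine Finset.sum_congr rfl fun j hj => ?_
      rw [Finset.mem_range] at hj
      congr 1
      omega
    rw [heq, this]
    refine Finset.sum_le_sum fun i _ => ?_
    calc μ ^ (i + 1) = μ * μ ^ i := by ring
      _ ≤ 1 * μ ^ i := by
          exact mul_le_mul_of_nonneg_right hμ1.le (pow_nonneg hμ0 i)
      _ = μ ^ i := one_mul _
  refine le_trans h1 ?_
  have hne : μ ≠ 1 := ne_of_lt hμ1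
  have hpos : 0 < 1 - μ := by linarith
  rw [le_div_iff₀ hpos]
  have := geom_sum_mul (x := μ) k
  have h2 : (∑ i ∈ Finset.range k, μ ^ i) * (1 - μ) = 1 - μ ^ k := by
    have := geom_sum_mul (x := μ) k
    nlinarith [this]
  rw [h2]
  have : 0 ≤ μ ^ k := pow_nonneg hμ0 k
  linarith

/-- Birkhoff sums of a Hölder function along exponentially shadowed orbits. -/
lemma shadow_sum_bound {T : X → X} {A : X → ℝ} {Abar C θ lam : ℝ}
    (hC : 0 ≤ C) (hA : ∀ x y : X, |A x - A y| ≤ C * dist x y ^ θ)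
    (hθ0 : 0 < θ) (hlam0 : 0 < lam) (hlam1 : lam < 1)
    {k : ℕ} {z z' : X} {d : ℝ} (hd0 : 0 ≤ d)
    (hsh : ∀ j, j ≤ k → dist (T^[j] z') (T^[j] z) ≤ lam ^ (k - j) * d) :
    |∑ j ∈ Finset.range k, (A (T^[j] z') - Abar)
      - ∑ j ∈ Finset.range k, (A (T^[j] z) - Abar)|
      ≤ C / (1 - lam ^ θ) * d ^ θ := by
  set μ := lam ^ θ with hμdef
  have hμ0 : 0 ≤ μ := Real.rpow_nonneg hlam0.le θ
  have hμ1 : μ < 1 := Real.rpow_lt_one hlam0.le hlam1 hθ0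
  have hpow : ∀ n : ℕ, ((lam ^ n : ℝ)) ^ θ = μ ^ n := by
    intro n
    rw [← Real.rpow_natCast lam n, ← Real.rpow_mul hlam0.le, mul_comm,
      Real.rpow_mul hlam0.le, Real.rpow_natCast]
  have hsumeq : ∑ j ∈ Finset.range k, (A (T^[j] z') - Abar)
      - ∑ j ∈ Finset.range k, (A (T^[j] z) - Abar)
      = ∑ j ∈ Finset.range k, (A (T^[j] z') - A (T^[j] z)) := by
    rw [← Finset.sum_sub_distrib]
    exact Finset.sum_congr rfl fun j _ => by ring
  rw [hsumeq]
  calc |∑ j ∈ Finset.range k, (A (T^[j] z') - A (T^[j] z))|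
      ≤ ∑ j ∈ Finset.range k, |A (T^[j] z') - A (T^[j] z)| :=
        Finset.abs_sum_le_sum_abs _ _
    _ ≤ ∑ j ∈ Finset.range k, C * μ ^ (k - j) * d ^ θ := by
        refine Finset.sum_le_sum fun j hj => ?_
        rw [Finset.mem_range] at hj
        have h1 : |A (T^[j] z') - A (T^[j] z)|
            ≤ C * dist (T^[j] z') (T^[j] z) ^ θ := hA _ _
        have h2 : dist (T^[j] z') (T^[j] z) ^ θ ≤ (lam ^ (k - j) * d) ^ θ :=
          Real.rpow_le_rpow dist_nonneg (hsh j hj.le) hθ0.le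
        have h3 : ((lam ^ (k - j) * d) : ℝ) ^ θ = μ ^ (k - j) * d ^ θ := by
          rw [Real.mul_rpow (pow_nonneg hlam0.le _) hd0, hpow]
        calc |A (T^[j] z') - A (T^[j] z)| ≤ C * dist (T^[j] z') (T^[j] z) ^ θ := h1
          _ ≤ C * ((lam ^ (k - j) * d) ^ θ) := by
              exact mul_le_mul_of_nonneg_left h2 hC
          _ = C * μ ^ (k - j) * d ^ θ := by rw [h3]; ring
    _ = C * d ^ θ * ∑ j ∈ Finset.range k, μ ^ (k - j) := by
        rw [Finset.mul_sum]
        exact Finset.sum_congr rfl fun j _ => by ring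
    _ ≤ C * d ^ θ * (1 / (1 - μ)) := by
        refine mul_le_mul_of_nonneg_left (geom_tail_sum hμ0 hμ1 k) ?_
        exact mul_nonneg hC (Real.rpow_nonneg hd0 θ)
    _ = C / (1 - μ) * d ^ θ := by ring

end Holder
section Triangle
set_option linter.unusedSectionVars false

variable {X : Type*} [MetricSpace X]

lemma ereal_le_coe_of_add {P : EReal} {r : ℝ}
    (h : ∀ η : ℝ, 0 < η → P ≤ ((r + η : ℝ) : EReal)) : P ≤ (r : EReal) := by
  induction P using EReal.rec with
  | bot => exact bot_le
  | coe s =>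
    rcases le_or_gt s r with hsr | hrs
    · exact_mod_cast hsr
    · exfalso
      have := h ((s - r) / 2) (by linarith)
      have h2 : s ≤ r + (s - r) / 2 := by exact_mod_cast this
      linarith
  | top => exact absurd (h 1 one_pos) (not_le.mpr (EReal.coe_lt_top _))

/-- a small positive scale making the Hölder error small -/
lemma small_scale {K θ η : ℝ} (hK : 0 ≤ K) (hθ0 : 0 < θ) (hη : 0 < η) :
    ∃ t : ℝ, 0 < t ∧ K * t ^ θ ≤ η := by
  refine ⟨min 1 ((η / (K + 1)) ^ (1 / θ)), lt_min one_pos (Real.rpow_pos_of_pos (by positivity) _), ?_⟩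
  have h1 : (min 1 ((η / (K + 1)) ^ (1 / θ))) ^ θ ≤ ((η / (K + 1)) ^ (1 / θ)) ^ θ :=
    Real.rpow_le_rpow (le_min zero_le_one (Real.rpow_nonneg (by positivity) _))
      (min_le_right _ _) hθ0.le
  have h2 : ((η / (K + 1)) ^ (1 / θ)) ^ θ = η / (K + 1) := by
    rw [← Real.rpow_mul (by positivity), one_div_mul_cancel (ne_of_gt hθ0), Real.rpow_one]
  have h12 : (min 1 ((η / (K + 1)) ^ (1 / θ))) ^ θ ≤ η / (K + 1) := by
    rw [h2] at h1; exact h1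
  have h3 : K * (min 1 ((η / (K + 1)) ^ (1 / θ))) ^ θ ≤ K * (η / (K + 1)) :=
    mul_le_mul_of_nonneg_left h12 hK
  refine le_trans h3 ?_
  rw [mul_div_assoc']
  rw [div_le_iff₀ (by positivity)]
  nlinarith

/-- Concatenation (triangle-type) inequality for the Peierls barrier. -/
lemma peierls_triangle [CompactSpace X] {T : X → X} (hT : IsExpandingTransitive T)
    {θ : ℝ} (hθ0 : 0 < θ) {A : X → ℝ} (hA : IsThetaHolder θ A) {Abar : ℝ}
    (a b c : X) {h₁ h₂ : ℝ}
    (hab : peierlsBarrier T A Abar a b ≤ (h₁ : EReal))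
    (hbc : peierlsBarrier T A Abar b c ≤ (h₂ : EReal)) :
    peierlsBarrier T A Abar a c ≤ ((h₁ + h₂ : ℝ) : EReal) := by
  obtain ⟨lam, hlam0, hlam1, δ, hδ, hcontr⟩ := hT.contracting
  obtain ⟨ρ, hρ, hbr⟩ := inverse_branch hT hlam0 hlam1 hδ hcontr
  obtain ⟨CA, hCA, hHold⟩ := hA
  set μ := lam ^ θ with hμdef
  have hμ0 : 0 ≤ μ := Real.rpow_nonneg hlam0.le θ
  have hμ1 : μ < 1 := Real.rpow_lt_one hlam0.le hlam1 hθ0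
  set K := CA / (1 - μ) with hKdef
  have hK0 : 0 ≤ K := div_nonneg hCA (by linarith)
  rw [peierlsBarrier]
  refine iSup_le fun ε => ?_
  refine ereal_le_coe_of_add fun η hη => ?_
  -- choose ε'
  obtain ⟨t, ht0, htη⟩ := small_scale hK0 hθ0 (show (0:ℝ) < η/3 by linarith)
  set ε' : ℝ := min (min (ε.1 / 3) (ρ / 4)) (t / 2) with hε'def
  have hε'0 : 0 < ε' := lt_min (lt_min (by linarith [ε.2]) (by linarith)) (by linarith)
  have hε'ε : ε' ≤ ε.1 / 3 := le_trans (min_le_left _ _) (min_le_left _ _)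
  have hε'ρ : 2 * ε' < ρ := by
    have h : ε' ≤ ρ / 4 := le_trans (min_le_left _ _) (min_le_right _ _)
    linarith
  have hε't : 2 * ε' ≤ t := by
    have h : ε' ≤ t / 2 := min_le_right _ _
    linarith
  have hKε' : K * (2 * ε') ^ θ ≤ η / 3 := by
    refine le_trans ?_ htη
    refine mul_le_mul_of_nonneg_left ?_ hK0
    exact Real.rpow_le_rpow (by linarith) hε't hθ0.le
  -- lower bounds on liminf at scale ε'
  have lb1 : Filter.liminf (fun k : ℕ => birkhoffInf T A Abar ε' a b k) Filter.atTop
      ≤ (h₁ : EReal) :=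
    le_trans (le_iSup (fun e : {e : ℝ // 0 < e} =>
      Filter.liminf (fun k : ℕ => birkhoffInf T A Abar e.1 a b k) Filter.atTop)
      (⟨ε', hε'0⟩ : {e : ℝ // 0 < e})) hab
  have lb2 : Filter.liminf (fun k : ℕ => birkhoffInf T A Abar ε' b c k) Filter.atTop
      ≤ (h₂ : EReal) :=
    le_trans (le_iSup (fun e : {e : ℝ // 0 < e} =>
      Filter.liminf (fun k : ℕ => birkhoffInf T A Abar e.1 b c k) Filter.atTop)
      (⟨ε', hε'0⟩ : {e : ℝ // 0 < e})) hbc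
  have freq1 : ∃ᶠ k in Filter.atTop,
      birkhoffInf T A Abar ε' a b k < ((h₁ + η/3 : ℝ) : EReal) := by
    refine Filter.frequently_lt_of_liminf_lt (by isBoundedDefault) ?_
    refine lt_of_le_of_lt lb1 ?_
    exact_mod_cast (by linarith : h₁ < h₁ + η/3)
  have freq2 : ∃ᶠ k in Filter.atTop,
      birkhoffInf T A Abar ε' b c k < ((h₂ + η/3 : ℝ) : EReal) := by
    refine Filter.frequently_lt_of_liminf_lt (by isBoundedDefault) ?_
    refine lt_of_le_of_lt lb2 ?_
    exact_mod_cast (by linarith : h₂ < h₂ + η/3)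
  obtain ⟨m, hm⟩ := freq2.exists
  obtain ⟨vm, ⟨w, hw1, hw2, rfl⟩, hvm⟩ := sInf_lt_iff.mp hm
  have hsumw : ∑ j ∈ Finset.range m, (A (T^[j] w) - Abar) < h₂ + η/3 := by
    exact_mod_cast hvm
  -- conclude via frequently
  refine Filter.liminf_le_of_frequently_le ?_ (by isBoundedDefault)
  rw [Filter.frequently_atTop] at freq1 ⊢
  intro N
  obtain ⟨k, hkN, hBk⟩ := freq1 N
  obtain ⟨vk, ⟨z, hz1, hz2, rfl⟩, hvk⟩ := sInf_lt_iff.mp hBk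
  have hsumz : ∑ j ∈ Finset.range k, (A (T^[j] z) - Abar) < h₁ + η/3 := by
    exact_mod_cast hvk
  refine ⟨k + m, le_trans hkN (Nat.le_add_right _ _), ?_⟩
  -- shadowing
  set d := dist w (T^[k] z) with hddef
  have hd2 : d < 2 * ε' := by
    calc d ≤ dist w b + dist b (T^[k] z) := dist_triangle _ _ _
      _ < ε' + ε' := by rw [dist_comm b (T^[k] z)]; exact add_lt_add hw1 hz2
      _ = 2 * ε' := by ring
  have hdρ : d < ρ := lt_trans hd2 hε'ρ
  obtain ⟨z', hz'iter, hz'sh⟩ := shadow hlam0 hlam1 hbr k z w hdρ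
  have hd0 : 0 ≤ d := dist_nonneg
  have hsumdiff := shadow_sum_bound (Abar := Abar) hCA hHold hθ0 hlam0 hlam1 hd0 hz'sh
  have hKd : K * d ^ θ ≤ η / 3 := by
    refine le_trans ?_ hKε'
    exact mul_le_mul_of_nonneg_left (Real.rpow_le_rpow hd0 hd2.le hθ0.le) hK0
  -- distance conditions for z'
  have hz'a : dist z' a < ε.1 := by
    have h0 := hz'sh 0 (Nat.zero_le k)
    simp only [Function.iterate_zero_apply] at h0
    have hlk : lam ^ (k - 0) * d ≤ d :=
      mul_le_of_le_one_left hd0 (pow_le_one₀ hlam0.le hlam1.le)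
    calc dist z' a ≤ dist z' z + dist z a := dist_triangle _ _ _
      _ < d + ε' := add_lt_add_of_le_of_lt (le_trans h0 hlk) hz1
      _ < 2 * ε' + ε' := by linarith
      _ ≤ ε.1 := by linarith [hε'ε]
  have hz'c : dist (T^[k + m] z') c < ε.1 := by
    have : T^[k + m] z' = T^[m] w := by
      rw [add_comm, Function.iterate_add_apply, hz'iter]
    rw [this]
    exact lt_of_lt_of_le hw2 (by linarith [hε'ε, ε.2.le])
  -- sum over k + m
  have hsplit : ∑ j ∈ Finset.range (k + m), (A (T^[j] z') - Abar)
      = ∑ j ∈ Finset.range k, (A (T^[j] z') - Abar)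
        + ∑ j ∈ Finset.range m, (A (T^[j] w) - Abar) := by
    rw [Finset.sum_range_add]
    congr 1
    refine Finset.sum_congr rfl fun j _ => ?_
    congr 2
    rw [add_comm k j, Function.iterate_add_apply, hz'iter]
  have htotal : ∑ j ∈ Finset.range (k + m), (A (T^[j] z') - Abar) ≤ h₁ + h₂ + η := by
    have hub : ∑ j ∈ Finset.range k, (A (T^[j] z') - Abar)
        - ∑ j ∈ Finset.range k, (A (T^[j] z) - Abar) ≤ K * d ^ θ := by
      have h := (abs_le.mp hsumdiff).2
      rw [hKdef, hμdef]
      exact h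
    rw [hsplit]
    linarith
  calc birkhoffInf T A Abar ε.1 a c (k + m)
      ≤ ((∑ j ∈ Finset.range (k + m), (A (T^[j] z') - Abar) : ℝ) : EReal) :=
        birkhoffInf_le z' hz'a hz'c
    _ ≤ ((h₁ + h₂ + η : ℝ) : EReal) := by exact_mod_cast htotal
    _ = (((h₁ + h₂) + η : ℝ) : EReal) := by norm_num

end Triangle
section Backward
set_option linter.unusedSectionVars false

variable {X : Type*} [MetricSpace X]

lemma ereal_flip {a b : EReal} {ra rb : ℝ} (ha : (ra : EReal) ≤ a) (hb : (rb : EReal) ≤ b)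
    (hsum : a + b = 0) : a ≤ ((-rb : ℝ) : EReal) ∧ b ≤ ((-ra : ℝ) : EReal) := by
  induction a using EReal.rec with
  | bot => exact absurd ha (by simp)
  | top =>
    exfalso
    induction b using EReal.rec with
    | bot => exact absurd hb (by simp)
    | coe β => simp at hsum
    | top => simp at hsum
  | coe α =>
    induction b using EReal.rec with
    | bot => exact absurd hb (by simp)
    | top => exfalso; simp at hsum
    | coe β =>
      have h1 : ra ≤ α := by exact_mod_cast ha
      have h2 : rb ≤ β := by exact_mod_cast hb
      have h3 : α + β = 0 := by exact_mod_cast hsum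
      constructor
      · exact_mod_cast (by linarith : α ≤ -rb)
      · exact_mod_cast (by linarith : β ≤ -ra)

lemma exists_backOrbit {T : X → X} {A : X → ℝ} {Abar : ℝ} {u : X → ℝ}
    (hu : IsCalibrated T A Abar u) (x : X) :
    ∃ s : ℕ → X, s 0 = x ∧ (∀ n, T (s (n + 1)) = s n) ∧
      (∀ n, u (s n) = u (s (n + 1)) + A (s (n + 1)) - Abar) := by
  classical
  have hex : ∀ y : X, ∃ y' : X, T y' = y ∧ u y = u y' + A y' - Abar := (hu.2 · |>.2)
  choose f hf1 hf2 using hex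
  refine ⟨fun n => f^[n] x, rfl, fun n => ?_, fun n => ?_⟩
  · show T (f^[n + 1] x) = f^[n] x
    rw [Function.iterate_succ_apply']; exact hf1 _
  · show u (f^[n] x) = u (f^[n + 1] x) + A (f^[n + 1] x) - Abar
    rw [Function.iterate_succ_apply']; exact hf2 _

lemma backOrbit_iter {T : X → X} {s : ℕ → X} (hs : ∀ n, T (s (n + 1)) = s n) :
    ∀ i m, i ≤ m → T^[i] (s m) = s (m - i) := by
  intro i
  induction i with
  | zero => intro m _; simp
  | succ i ih =>
    intro m him
    obtain ⟨m', rfl⟩ : ∃ m', m = m' + 1 := ⟨m - 1, by omega⟩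
    rw [Function.iterate_succ_apply, hs m', ih m' (by omega)]
    congr 1
    omega

lemma backOrbit_sum {T : X → X} {A : X → ℝ} {Abar : ℝ} {u : X → ℝ} {s : ℕ → X}
    (hs : ∀ n, T (s (n + 1)) = s n)
    (hcal : ∀ n, u (s n) = u (s (n + 1)) + A (s (n + 1)) - Abar) :
    ∀ n m, n ≤ m → ∑ i ∈ Finset.range (m - n), (A (T^[i] (s m)) - Abar)
      = u (s n) - u (s m) := by
  intro n m hnm
  have hterm : ∀ i ∈ Finset.range (m - n),
      A (T^[i] (s m)) - Abar = u (s (m - (i + 1))) - u (s (m - i)) := by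
    intro i hi
    rw [Finset.mem_range] at hi
    rw [backOrbit_iter hs i m (by omega)]
    have hmi : m - i = (m - (i + 1)) + 1 := by omega
    rw [hmi]
    have := hcal (m - (i + 1))
    linarith
  have e1 : m - (m - n) = n := by omega
  calc ∑ i ∈ Finset.range (m - n), (A (T^[i] (s m)) - Abar)
      = ∑ i ∈ Finset.range (m - n),
        ((fun j => u (s (m - j))) (i + 1) - (fun j => u (s (m - j))) i) := by
        refine Finset.sum_congr rfl fun i hi => ?_
        rw [hterm i hi]
    _ = (fun j => u (s (m - j))) (m - n) - (fun j => u (s (m - j))) 0 := by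
        exact Finset.sum_range_sub (fun j => u (s (m - j))) (m - n)
    _ = u (s n) - u (s m) := by
        simp only
        rw [e1, Nat.sub_zero]

end Backward
section Accum
set_option linter.unusedSectionVars false

variable {X : Type*} [MetricSpace X]

lemma ereal_exists_real {P : EReal} (h1 : P ≠ ⊥) (h2 : P ≠ ⊤) : ∃ s : ℝ, P = ↑s := by
  induction P using EReal.rec with
  | bot => exact absurd rfl h1
  | coe s => exact ⟨s, rfl⟩
  | top => exact absurd rfl h2

lemma back_accum [CompactSpace X] {T : X → X} {A : X → ℝ} {Abar : ℝ} {u : X → ℝ}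
    (hu : IsCalibrated T A Abar u) (x : X) :
    ∃ xb : X, xb ∈ nonwanderingSet T A Abar ∧
      peierlsBarrier T A Abar xb x ≤ ((u x - u xb : ℝ) : EReal) := by
  obtain ⟨s, hs0, hs1, hs2⟩ := exists_backOrbit hu x
  obtain ⟨xb, -, φ, hφ, hconv⟩ := IsCompact.tendsto_subseq isCompact_univ
    (fun n => Set.mem_univ (s n))
  have huconv : Filter.Tendsto (fun j => u (s (φ j))) Filter.atTop (nhds (u xb)) :=
    (hu.1.tendsto xb).comp hconv
  have hdist : ∀ ε : ℝ, 0 < ε → ∀ᶠ j in Filter.atTop, dist (s (φ j)) xb < ε :=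
    fun ε hε => Metric.tendsto_nhds.mp hconv ε hε
  have huval : ∀ ε : ℝ, 0 < ε → ∀ᶠ j in Filter.atTop, |u (s (φ j)) - u xb| < ε := by
    intro ε hε
    have := Metric.tendsto_nhds.mp huconv ε hε
    simpa [Real.dist_eq] using this
  refine ⟨xb, ?_, ?_⟩
  · -- xb is non-wandering
    intro ε hε
    obtain ⟨J, hJ⟩ := Filter.eventually_atTop.mp
      ((hdist (ε / 2) (by linarith)).and (huval (ε / 2) (by linarith)))
    set n := φ J with hn
    set m := φ (J + 1) with hm
    have hnm : n < m := hφ (Nat.lt_succ_self J)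
    have h1 := hJ J le_rfl
    have h2 := hJ (J + 1) (Nat.le_succ J)
    refine ⟨m - n, by omega, s m, ?_, ?_, ?_⟩
    · rw [dist_comm]; exact lt_of_lt_of_le h2.1 (by linarith)
    · have hit : T^[m - n] (s m) = s n := by
        rw [backOrbit_iter hs1 (m - n) m (by omega)]
        congr 1
        omega
      rw [hit, dist_comm]
      exact lt_of_lt_of_le h1.1 (by linarith)
    · rw [backOrbit_sum hs1 hs2 n m hnm.le]
      have habs : |u (s n) - u (s m)| ≤ |u (s n) - u xb| + |u xb - u (s m)| :=
        abs_sub_le _ _ _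
      rw [abs_sub_comm (u xb) (u (s m))] at habs
      calc |u (s n) - u (s m)| ≤ |u (s n) - u xb| + |u (s m) - u xb| := habs
        _ < ε / 2 + ε / 2 := add_lt_add h1.2 h2.2
        _ = ε := by ring
  · -- Peierls barrier bound along the backward orbit
    rw [peierlsBarrier]
    refine iSup_le fun ε => ereal_le_coe_of_add fun η hη => ?_
    refine Filter.liminf_le_of_frequently_le ?_ (by isBoundedDefault)
    rw [Filter.frequently_atTop]
    intro N
    obtain ⟨J, hJ⟩ := Filter.eventually_atTop.mp ((hdist ε.1 ε.2).and (huval η hη))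
    set j := max J N with hj
    have hJj := hJ j (le_max_left _ _)
    have hjN : N ≤ φ j := le_trans (le_max_right J N) hφ.le_apply
    refine ⟨φ j, hjN, ?_⟩
    have hiter : T^[φ j] (s (φ j)) = x := by
      rw [backOrbit_iter hs1 (φ j) (φ j) le_rfl, Nat.sub_self, hs0]
    have hb := birkhoffInf_le (T := T) (A := A) (Abar := Abar) (ε := ε.1)
      (x := xb) (x' := x) (k := φ j) (s (φ j)) hJj.1 (by rw [hiter]; simpa using ε.2)
    refine le_trans hb ?_
    have hsum : ∑ i ∈ Finset.range (φ j), (A (T^[i] (s (φ j))) - Abar)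
        = u x - u (s (φ j)) := by
      have := backOrbit_sum hs1 hs2 0 (φ j) (Nat.zero_le _)
      rw [Nat.sub_zero, hs0] at this
      exact this
    rw [hsum]
    have habs := abs_lt.mp hJj.2
    exact_mod_cast (by linarith [habs.1] : u x - u (s (φ j)) ≤ u x - u xb + η)

end Accum


/-- if `Ω(A)` is a finite disjoint union of irreducible
components with marked points `xp i`, any continuous calibrated sub-action `u`
has `(u (xp 1), …, u (xp r))` in the constraint set and
`u x = min_i [u (xp i) + h_A(xp i, x)]`. -/
theorem calibrated_gives_constraint_and_min_formula {X : Type*} [MetricSpace X] [CompactSpace X] [Nonempty X]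
    [MeasurableSpace X] [BorelSpace X]
    (T : X → X) (hT : IsExpandingTransitive T)
    (θ : ℝ) (hθ0 : 0 < θ) (hθ1 : θ ≤ 1)
    (A : X → ℝ) (hA : IsThetaHolder θ A)
    (Abar : ℝ) (hAbar : IsErgMinValue T A Abar)
    (r : ℕ) (hr : 0 < r) (C : Fin r → Set X)
    (hC : ∀ i, IsIrredComponent T A Abar (C i))
    (hdisj : ∀ i j, i ≠ j → Disjoint (C i) (C j))
    (hcover : nonwanderingSet T A Abar = ⋃ i, C i)
    (xp : Fin r → X) (hxp : ∀ i, xp i ∈ C i)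
    (u : X → ℝ) (hu : IsCalibrated T A Abar u) :
    (∀ i j, ((u (xp j) - u (xp i) : ℝ) : EReal) ≤
      peierlsBarrier T A Abar (xp i) (xp j)) ∧
    (∀ x : X, IsLeast {v : ℝ | ∃ i : Fin r,
      (v : EReal) = (u (xp i) : EReal) + peierlsBarrier T A Abar (xp i) x} (u x)) := by
  have hsub : ∀ y : X, u (T y) - u y + Abar ≤ A y := by
    intro y
    have := (hu.2 (T y)).1 y rfl
    linarith
  have L1 : ∀ a b : X, ((u b - u a : ℝ) : EReal) ≤ peierlsBarrier T A Abar a b :=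
    peierls_ge_sub hu.1 hsub
  refine ⟨fun i j => L1 (xp i) (xp j), fun x => ⟨?_, ?_⟩⟩
  · -- membership: ∃ i, ↑(u x) = ↑(u (xp i)) + h(xp i, x)
    obtain ⟨xb, hxbΩ, hxbP⟩ := back_accum hu x
    have hmem : xb ∈ ⋃ i, C i := hcover ▸ hxbΩ
    obtain ⟨i, hxbi⟩ := Set.mem_iUnion.mp hmem
    obtain ⟨cpt, hcptΩ, hCeq⟩ := hC i
    have hxb' : xb ∈ {y ∈ nonwanderingSet T A Abar |
        peierlsBarrier T A Abar cpt y + peierlsBarrier T A Abar y cpt = 0} :=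
      hCeq ▸ hxbi
    have hxp' : xp i ∈ {y ∈ nonwanderingSet T A Abar |
        peierlsBarrier T A Abar cpt y + peierlsBarrier T A Abar y cpt = 0} :=
      hCeq ▸ (hxp i)
    obtain ⟨-, hxbc⟩ := hxb'
    obtain ⟨-, hxpc⟩ := hxp'
    have f1 : peierlsBarrier T A Abar (xp i) cpt
        ≤ ((-(u (xp i) - u cpt) : ℝ) : EReal) :=
      (ereal_flip (L1 cpt (xp i)) (L1 (xp i) cpt) hxpc).2
    have f2 : peierlsBarrier T A Abar cpt xb
        ≤ ((-(u cpt - u xb) : ℝ) : EReal) :=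
      (ereal_flip (L1 cpt xb) (L1 xb cpt) hxbc).1
    have t1 := peierls_triangle hT hθ0 hA (xp i) cpt xb f1 f2
    have t2 := peierls_triangle hT hθ0 hA (xp i) xb x t1 hxbP
    have heqr : (-(u (xp i) - u cpt) + -(u cpt - u xb)) + (u x - u xb)
        = u x - u (xp i) := by ring
    rw [heqr] at t2
    have heq : peierlsBarrier T A Abar (xp i) x = ((u x - u (xp i) : ℝ) : EReal) :=
      le_antisymm t2 (L1 (xp i) x)
    refine ⟨i, ?_⟩
    rw [heq, ← EReal.coe_add]
    exact_mod_cast (by ring : u x = u (xp i) + (u x - u (xp i)))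
  · -- lower bound
    rintro v ⟨i, hv⟩
    have hL := L1 (xp i) x
    have hne : peierlsBarrier T A Abar (xp i) x ≠ ⊤ := by
      intro h
      rw [h] at hv
      simp at hv
    have hnb : peierlsBarrier T A Abar (xp i) x ≠ ⊥ := by
      intro h
      rw [h] at hL
      exact EReal.coe_ne_bot _ (le_bot_iff.mp hL)
    obtain ⟨sP, hsP⟩ := ereal_exists_real hnb hne
    rw [hsP] at hv hL
    rw [← EReal.coe_add] at hv
    have hv' : v = u (xp i) + sP := by exact_mod_cast hv
    have hL' : u x - u (xp i) ≤ sP := by exact_mod_cast hL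
    linarith
end

section
/- Let A : X → ℝ be θ-Hölder for some θ ∈ (0,1]. The relation on Ω(A) defined by x ∼ x̄ if and only if h_A(x, x̄) + h_A(x̄, x) = 0 is an equivalence relation: it is reflexive, symmetric, and transitive. -/
open MeasureTheory Filter Topology

/-!
Since the inverse branches of `T` contract uniformly, an orbit segment `z, …, T^k z` is shadowed by
a segment ending at any point `q` close to `T^k z`, at distance `O(lam^(k-i))` at time `i`; as `A`
is Hölder, the Birkhoff sums of `A - Abar` along the two segments differ by `O(d(q, T^k z)^θ)`.
Hence segments `x → y` and `y → z` concatenate into a segment `x → z` of almost additive cost,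
which gives `h(x, z) ≤ h(x, y) + h(y, z)`, and an almost closed segment is shadowed by a periodic
orbit (the fixed point of the contracting inverse branch of `T^k`). The uniform measure on a
periodic orbit is invariant, so by minimality of `Abar` its Birkhoff sum is nonnegative; closing
up loops `x → y → x` gives `h(x, y) + h(y, x) ≥ 0`, and transitivity excludes `h(x, y) = -∞`. At a
non-wandering point `x`, closing almost returning orbits gives periodic orbits near `x` of
arbitrarily small cost, and winding around them many times shows `h(x, x) ≤ 0`.
-/

open Filter Topology Metric Function
open scoped ENNReal

theorem Function.IsPeriodicPt.birkhoffSum_mul {α M : Type*} [AddCommMonoid M] {f : α → α}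
    {n : ℕ} {x : α} (hx : IsPeriodicPt f n x) (g : α → M) (m : ℕ) :
    birkhoffSum f g (n * m) x = m • birkhoffSum f g n x := by
  induction m with
  | zero => simp
  | succ m ih => rw [Nat.mul_succ, birkhoffSum_add, ih, (hx.mul_const m).eq, succ_nsmul]

theorem IsErgMinValue.birkhoffSum_nonneg {X : Type*} [MeasurableSpace X]
    [MeasurableSingletonClass X] {T : X → X} {A : X → ℝ} {Abar : ℝ}
    (hAbar : IsErgMinValue T A Abar) (hmeas : Measurable T) {n : ℕ} {p : X} (hn : 0 < n)
    (hp : IsPeriodicPt T n p) : 0 ≤ birkhoffSum T (fun x => A x - Abar) n p := by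
  set μ : Measure X := (n : ℝ≥0∞)⁻¹ • ∑ i ∈ Finset.range n, Measure.dirac (T^[i] p)
  have hn' : (n : ℝ≥0∞) ≠ 0 := by exact_mod_cast hn.ne'
  have hprob : IsProbabilityMeasure μ :=
    ⟨by simp [μ, ENNReal.inv_mul_cancel hn' (ENNReal.natCast_ne_top n)]⟩
  have hshift : ∑ i ∈ Finset.range n, Measure.dirac (T^[i + 1] p) =
      ∑ i ∈ Finset.range n, Measure.dirac (T^[i] p) := by
    obtain ⟨m, rfl⟩ := Nat.exists_eq_add_one_of_ne_zero hn.ne'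
    rw [Finset.sum_range_succ, Finset.sum_range_succ' (fun i => Measure.dirac (T^[i] p)), hp.eq,
      iterate_zero_apply, add_comm]
  have hinv : MeasurePreserving T μ μ := by
    refine ⟨hmeas, ?_⟩
    simp only [μ, Measure.map_smul, Measure.map_finset_sum hmeas.aemeasurable,
      Measure.map_dirac' hmeas, ← iterate_succ_apply' T, hshift]
  have hint : ∫ x, A x ∂μ = (∑ i ∈ Finset.range n, A (T^[i] p)) / n := by
    rw [integral_smul_measure, integral_finsetSum_measure fun i _ => integrable_dirac (by simp)]
    simp [div_eq_inv_mul]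
  have hmin := hAbar.2 μ hprob hinv
  rw [hint, le_div_iff₀ (by exact_mod_cast hn)] at hmin
  simp only [birkhoffSum, Finset.sum_sub_distrib, Finset.sum_const, Finset.card_range,
    nsmul_eq_mul]
  linarith

section Holder

variable {X : Type*} [MetricSpace X] {θ : ℝ} {f : X → ℝ}

theorem IsThetaHolder.sub_const (hf : IsThetaHolder θ f) (c : ℝ) :
    IsThetaHolder θ (fun x => f x - c) := by
  obtain ⟨C, hC0, hC⟩ := hf
  exact ⟨C, hC0, fun x y => by simpa only [sub_sub_sub_cancel_right] using hC x y⟩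

theorem abs_birkhoffSum_sub_le {T : X → X} {C lam d : ℝ} {k : ℕ} {w z : X} (hC : 0 ≤ C)
    (hθ : 0 < θ) (hf : ∀ x y, |f x - f y| ≤ C * dist x y ^ θ) (hlam0 : 0 ≤ lam)
    (hlam1 : lam < 1) (hd : 0 ≤ d)
    (hwz : ∀ i < k, dist (T^[i] w) (T^[i] z) ≤ lam ^ (k - i) * d) :
    |birkhoffSum T f k w - birkhoffSum T f k z| ≤ C * d ^ θ / (1 - lam ^ θ) := by
  set s := lam ^ θ
  have hs0 : 0 ≤ s := Real.rpow_nonneg hlam0 θ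
  have hs1 : s < 1 := Real.rpow_lt_one hlam0 hlam1 hθ
  have hterm : ∀ i < k, |f (T^[i] w) - f (T^[i] z)| ≤ C * d ^ θ * s ^ (k - i) := fun i hi =>
    calc |f (T^[i] w) - f (T^[i] z)| ≤ C * dist (T^[i] w) (T^[i] z) ^ θ := hf _ _
      _ ≤ C * (lam ^ (k - i) * d) ^ θ := by gcongr; exact hwz i hi
      _ = C * d ^ θ * s ^ (k - i) := by
        rw [Real.mul_rpow (pow_nonneg hlam0 _) hd, ← Real.rpow_natCast, ← Real.rpow_mul hlam0,
          mul_comm _ θ, Real.rpow_mul hlam0, Real.rpow_natCast]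
        ring
  have hgeom : ∑ i ∈ Finset.range k, s ^ (k - i) ≤ 1 / (1 - s) := calc
    ∑ i ∈ Finset.range k, s ^ (k - i) ≤ ∑ i ∈ Finset.range k, s ^ (k - 1 - i) :=
      Finset.sum_le_sum fun i _ => pow_le_pow_of_le_one hs0 hs1.le (by omega)
    _ = ∑ i ∈ Finset.range k, s ^ i := Finset.sum_range_reflect (s ^ ·) k
    _ ≤ s ^ 0 / (1 - s) := by
      rw [Finset.range_eq_Ico]; exact geom_sum_Ico_le_of_lt_one hs0 hs1
    _ = 1 / (1 - s) := by rw [pow_zero]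
  rw [birkhoffSum, birkhoffSum, ← Finset.sum_sub_distrib]
  calc |∑ i ∈ Finset.range k, (f (T^[i] w) - f (T^[i] z))|
      ≤ ∑ i ∈ Finset.range k, C * d ^ θ * s ^ (k - i) :=
        (Finset.abs_sum_le_sum_abs _ _).trans
          (Finset.sum_le_sum fun i hi => hterm i (Finset.mem_range.1 hi))
    _ ≤ C * d ^ θ * (1 / (1 - s)) := by
        rw [← Finset.mul_sum]; gcongr
    _ = C * d ^ θ / (1 - s) := by ring

theorem IsThetaHolder.exists_abs_birkhoffSum_sub_lt (hθ : 0 < θ) (hf : IsThetaHolder θ f)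
    (T : X → X) {lam : ℝ} (hlam0 : 0 ≤ lam) (hlam1 : lam < 1) {η : ℝ} (hη : 0 < η) :
    ∃ ρ > 0, ∀ (k : ℕ) (w z : X) (d : ℝ), 0 ≤ d → d < ρ →
      (∀ i < k, dist (T^[i] w) (T^[i] z) ≤ lam ^ (k - i) * d) →
      |birkhoffSum T f k w - birkhoffSum T f k z| < η := by
  obtain ⟨C, hC0, hC⟩ := hf
  have hlim : Tendsto (fun d : ℝ => C * d ^ θ / (1 - lam ^ θ)) (𝓝 0) (𝓝 0) := by
    have := (((Real.continuous_rpow_const hθ.le).const_mul C).div_const (1 - lam ^ θ)).tendsto 0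
    simpa [Real.zero_rpow hθ.ne'] using this
  obtain ⟨ρ, hρ, hsmall⟩ := Metric.tendsto_nhds_nhds.1 hlim η hη
  refine ⟨ρ, hρ, fun k w z d hd0 hdρ hwz => ?_⟩
  have hbound := hsmall (by rwa [Real.dist_0_eq_abs, abs_of_nonneg hd0] : dist d 0 < ρ)
  rw [Real.dist_0_eq_abs] at hbound
  exact (abs_birkhoffSum_sub_le hC0 hθ hC hlam0 hlam1 hd0 hwz).trans_lt
    ((le_abs_self _).trans_lt hbound)

end Holder

theorem IsOpenMap.exists_forall_ball_subset_image {X : Type*} [MetricSpace X] [CompactSpace X]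
    {T : X → X} (hop : IsOpenMap T) (hcont : Continuous T) {ρ : ℝ} (hρ : 0 < ρ) :
    ∃ r > 0, ∀ p, ball (T p) r ⊆ T '' ball p ρ := by
  -- thicken the compact graph of `T` inside the open set `{(p, q) | q ∈ T '' ball p ρ}`
  have hopen : IsOpen {pq : X × X | pq.2 ∈ T '' ball pq.1 ρ} := by
    refine isOpen_iff_mem_nhds.2 fun ⟨p, q⟩ ⟨u, hu, huq⟩ => ?_
    set s := ρ - dist u p
    have hs : 0 < s := by rw [mem_ball] at hu; linarith
    filter_upwards [prod_mem_nhds (ball_mem_nhds p (half_pos hs))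
      (huq ▸ hop.image_mem_nhds (ball_mem_nhds u (half_pos hs)))]
    rintro ⟨p', q'⟩ ⟨hp', v, hv, rfl⟩
    refine ⟨v, ?_, rfl⟩
    rw [mem_ball] at hp' hv ⊢
    linarith [dist_triangle4 v u p p', dist_comm p p']
  have hgraph : IsCompact (Set.range fun p => (p, T p)) :=
    isCompact_range (continuous_id.prodMk hcont)
  obtain ⟨r, hr, hthick⟩ := hgraph.exists_thickening_subset_open hopen
    (Set.range_subset_iff.2 fun p => ⟨p, mem_ball_self hρ, rfl⟩)
  refine ⟨r, hr, fun p q hq => hthick (a := (p, q)) ?_⟩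
  refine mem_thickening_iff.2 ⟨(p, T p), ⟨p, rfl⟩, ?_⟩
  rw [Prod.dist_eq, dist_self]
  exact max_lt hr hq

section Expansion

variable {X : Type*} [MetricSpace X]

structure ExpansionData (T : X → X) where
  lam : ℝ
  δ : ℝ
  r : ℝ
  lam_nonneg : 0 ≤ lam
  lam_lt_one : lam < 1
  δ_pos : 0 < δ
  r_pos : 0 < r
  dist_le_mul_dist : ∀ x y, dist x y ≤ δ → dist x y ≤ lam * dist (T x) (T y)
  exists_preimage : ∀ p q, dist q (T p) ≤ r → ∃ p', T p' = q ∧ dist p' p ≤ lam * dist q (T p)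

theorem IsExpandingTransitive.nonempty_expansionData [CompactSpace X] {T : X → X}
    (hT : IsExpandingTransitive T) : Nonempty (ExpansionData T) := by
  obtain ⟨lam, hlam0, hlam1, δ, hδ, hcontr⟩ := hT.contracting
  obtain ⟨r, hr, hball⟩ := hT.isOpenMap.exists_forall_ball_subset_image hT.cont hδ
  refine ⟨⟨lam, δ, r / 2, hlam0.le, hlam1, hδ, half_pos hr, hcontr, fun p q hq => ?_⟩⟩
  obtain ⟨p', hp', rfl⟩ := hball p (mem_ball.2 (by linarith))
  exact ⟨p', rfl, hcontr p' p (mem_ball.1 hp').le⟩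

namespace ExpansionData

variable {T : X → X} {θ : ℝ} {g : X → ℝ}

theorem lam_pow_le_one (E : ExpansionData T) (j : ℕ) : E.lam ^ j ≤ 1 :=
  pow_le_one₀ E.lam_nonneg E.lam_lt_one.le

theorem dist_le_pow_mul_dist_iterate (E : ExpansionData T) {k : ℕ} {a b : X}
    (h : ∀ i < k, dist (T^[i] a) (T^[i] b) ≤ E.δ) :
    dist a b ≤ E.lam ^ k * dist (T^[k] a) (T^[k] b) := by
  induction k generalizing a b with
  | zero => simp
  | succ k ih =>
    have htail : dist (T a) (T b) ≤ E.lam ^ k * dist (T^[k] (T a)) (T^[k] (T b)) :=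
      ih fun i hi => by simpa only [iterate_succ_apply] using h (i + 1) (by omega)
    calc dist a b ≤ E.lam * dist (T a) (T b) := E.dist_le_mul_dist a b (h 0 k.succ_pos)
      _ ≤ E.lam * (E.lam ^ k * dist (T^[k] (T a)) (T^[k] (T b))) :=
        mul_le_mul_of_nonneg_left htail E.lam_nonneg
      _ = E.lam ^ (k + 1) * dist (T^[k + 1] a) (T^[k + 1] b) := by
        rw [iterate_succ_apply, iterate_succ_apply, pow_succ']; ring

theorem exists_pullback (E : ExpansionData T) (k : ℕ) (z q : X)
    (hq : dist q (T^[k] z) ≤ E.r) :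
    ∃ w, T^[k] w = q ∧
      ∀ i ≤ k, dist (T^[i] w) (T^[i] z) ≤ E.lam ^ (k - i) * dist q (T^[k] z) := by
  induction k generalizing z with
  | zero => exact ⟨q, rfl, fun i hi => by obtain rfl := Nat.le_zero.1 hi; simp⟩
  | succ k ih =>
    rw [iterate_succ_apply] at hq ⊢
    set D := dist q (T^[k] (T z))
    obtain ⟨w', rfl, hw'⟩ := ih (T z) hq
    have hw'0 : dist w' (T z) ≤ E.lam ^ k * D := by simpa using hw' 0 k.zero_le
    obtain ⟨w, rfl, hw⟩ := E.exists_preimage z w'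
      (hw'0.trans ((mul_le_of_le_one_left dist_nonneg (E.lam_pow_le_one k)).trans hq))
    refine ⟨w, by rw [iterate_succ_apply], fun i hi => ?_⟩
    rcases i with _ | i
    · calc dist w z ≤ E.lam * dist (T w) (T z) := hw
        _ ≤ E.lam * (E.lam ^ k * D) := mul_le_mul_of_nonneg_left hw'0 E.lam_nonneg
        _ = E.lam ^ (k + 1 - 0) * D := by rw [Nat.sub_zero, pow_succ']; ring
    · simpa only [iterate_succ_apply, Nat.add_sub_add_right] using hw' i (by omega)

theorem exists_isPeriodicPt_shadow [CompleteSpace X] (E : ExpansionData T) {k : ℕ} (hk : 0 < k)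
    {z : X} (hz : dist (T^[k] z) z ≤ (1 - E.lam) * min E.r (E.δ / 2)) :
    ∃ p, IsPeriodicPt T k p ∧ ∀ i ≤ k,
      dist (T^[i] p) (T^[i] z) ≤ E.lam ^ (k - i) * (dist (T^[k] z) z / (1 - E.lam)) := by
  have hlam : 0 < 1 - E.lam := sub_pos.2 E.lam_lt_one
  set ρ := dist (T^[k] z) z / (1 - E.lam)
  have hρ0 : 0 ≤ ρ := by positivity
  have hρ : ρ ≤ min E.r (E.δ / 2) := (div_le_iff₀' hlam).2 hz
  have hlamk : E.lam ^ k ≤ E.lam := pow_le_of_le_one E.lam_nonneg E.lam_lt_one.le hk.ne'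
  -- `p` is the fixed point of the inverse branch `G` of `T^[k]` along the orbit of `z`,
  -- a contraction of `closedBall z (lam * ρ)`
  set B := closedBall z (E.lam * ρ)
  have hpull : ∀ a : B, ∃ b : B, T^[k] b = a ∧
      ∀ i ≤ k, dist (T^[i] (b : X)) (T^[i] z) ≤ E.lam ^ (k - i) * ρ := by
    intro a
    have ha : dist (a : X) (T^[k] z) ≤ ρ := by
      have : dist (T^[k] z) z = (1 - E.lam) * ρ := by rw [mul_div_cancel₀ _ hlam.ne']
      linarith [dist_triangle (a : X) z (T^[k] z), mem_closedBall.1 a.2, dist_comm z (T^[k] z)]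
    obtain ⟨b, hb, hbz⟩ := E.exists_pullback k z a (ha.trans (hρ.trans (min_le_left _ _)))
    have horb : ∀ i ≤ k, dist (T^[i] b) (T^[i] z) ≤ E.lam ^ (k - i) * ρ := fun i hi =>
      (hbz i hi).trans (mul_le_mul_of_nonneg_left ha (pow_nonneg E.lam_nonneg _))
    have hb0 : dist b z ≤ E.lam ^ k * ρ := by simpa using horb 0 k.zero_le
    exact ⟨⟨b, mem_closedBall.2 (hb0.trans (by gcongr))⟩, hb, horb⟩
  choose G hGk hGorb using hpull
  have hnear : ∀ a : B, ∀ i < k, dist (T^[i] (G a : X)) (T^[i] z) ≤ E.δ / 2 := fun a i hi =>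
    (hGorb a i hi.le).trans ((mul_le_of_le_one_left hρ0 (E.lam_pow_le_one _)).trans
      (hρ.trans (min_le_right _ _)))
  have : Nonempty B := ⟨⟨z, mem_closedBall_self (mul_nonneg E.lam_nonneg hρ0)⟩⟩
  have : CompleteSpace B := isClosed_closedBall.completeSpace_coe
  have hG : ContractingWith ⟨E.lam, E.lam_nonneg⟩ G := by
    refine ⟨E.lam_lt_one, LipschitzWith.of_dist_le_mul fun a b => ?_⟩
    have hclose : ∀ i < k, dist (T^[i] (G a : X)) (T^[i] (G b)) ≤ E.δ := fun i hi => by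
      linarith [dist_triangle_right (T^[i] (G a : X)) (T^[i] (G b)) (T^[i] z), hnear a i hi,
        hnear b i hi]
    calc dist (G a) (G b) ≤ E.lam ^ k * dist (T^[k] (G a : X)) (T^[k] (G b)) :=
          E.dist_le_pow_mul_dist_iterate hclose
      _ = E.lam ^ k * dist a b := by rw [hGk, hGk]; rfl
      _ ≤ E.lam * dist a b := by gcongr
  set p := ContractingWith.fixedPoint G hG
  have hp : G p = p := hG.fixedPoint_isFixedPt
  refine ⟨p, ?_, fun i hi => ?_⟩
  · change T^[k] _ = _
    conv_lhs => rw [← hp]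
    exact hGk _
  · rw [← hp]
    exact hGorb _ i hi

theorem exists_isPeriodicPt_near [CompleteSpace X] (E : ExpansionData T) (hθ : 0 < θ)
    (hg : IsThetaHolder θ g) {η : ℝ} (hη : 0 < η) :
    ∃ ε > 0, ∀ k, 0 < k → ∀ z, dist (T^[k] z) z < ε →
      ∃ p, IsPeriodicPt T k p ∧ dist p z < η ∧
        |birkhoffSum T g k p - birkhoffSum T g k z| < η := by
  obtain ⟨ρ₀, hρ₀, hsum⟩ := hg.exists_abs_birkhoffSum_sub_lt hθ T E.lam_nonneg E.lam_lt_one hη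
  have hlam : 0 < 1 - E.lam := sub_pos.2 E.lam_lt_one
  have hmin : 0 < min (min E.r (E.δ / 2)) (min η ρ₀) :=
    lt_min (lt_min E.r_pos (half_pos E.δ_pos)) (lt_min hη hρ₀)
  refine ⟨(1 - E.lam) * min (min E.r (E.δ / 2)) (min η ρ₀), mul_pos hlam hmin,
    fun k hk z hz => ?_⟩
  obtain ⟨p, hp, horb⟩ := E.exists_isPeriodicPt_shadow hk
    (hz.le.trans (mul_le_mul_of_nonneg_left (min_le_left _ _) hlam.le))
  set ρ := dist (T^[k] z) z / (1 - E.lam)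
  have hρ : ρ < min η ρ₀ := (div_lt_iff₀' hlam).2 (hz.trans_le
    (mul_le_mul_of_nonneg_left (min_le_right _ _) hlam.le))
  have hpz : dist p z ≤ ρ := by
    simpa using (horb 0 k.zero_le).trans
      (mul_le_of_le_one_left (by positivity) (E.lam_pow_le_one k))
  exact ⟨p, hp, hpz.trans_lt (hρ.trans_le (min_le_left _ _)),
    hsum k p z ρ (by positivity) (hρ.trans_le (min_le_right _ _)) fun i hi => horb i hi.le⟩

theorem exists_birkhoffSum_concat (E : ExpansionData T) (hθ : 0 < θ) (hg : IsThetaHolder θ g)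
    {η : ℝ} (hη : 0 < η) :
    ∃ ε > 0, ∀ (k₁ k₂ : ℕ) (z₁ z₂ : X), dist z₂ (T^[k₁] z₁) < ε →
      ∃ w, T^[k₁ + k₂] w = T^[k₂] z₂ ∧ dist w z₁ < η ∧
        birkhoffSum T g (k₁ + k₂) w < birkhoffSum T g k₁ z₁ + birkhoffSum T g k₂ z₂ + η := by
  obtain ⟨ρ₀, hρ₀, hsum⟩ := hg.exists_abs_birkhoffSum_sub_lt hθ T E.lam_nonneg E.lam_lt_one hη
  refine ⟨min E.r (min η ρ₀), lt_min E.r_pos (lt_min hη hρ₀), fun k₁ k₂ z₁ z₂ hd => ?_⟩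
  obtain ⟨w, hw, hwz⟩ := E.exists_pullback k₁ z₁ z₂ (hd.le.trans (min_le_left _ _))
  have hd' : dist z₂ (T^[k₁] z₁) < min η ρ₀ := hd.trans_le (min_le_right _ _)
  have hw0 : dist w z₁ ≤ dist z₂ (T^[k₁] z₁) := by
    simpa using (hwz 0 k₁.zero_le).trans
      (mul_le_of_le_one_left dist_nonneg (E.lam_pow_le_one k₁))
  have hcmp := hsum k₁ w z₁ _ dist_nonneg (hd'.trans_le (min_le_right _ _))
    fun i hi => hwz i hi.le
  refine ⟨w, by rw [add_comm, iterate_add_apply, hw],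
    hw0.trans_lt (hd'.trans_le (min_le_left _ _)), ?_⟩
  rw [birkhoffSum_add, hw]
  linarith [(abs_lt.1 hcmp).2]

theorem exists_forall_neg_lt_birkhoffSum_add [CompleteSpace X] (E : ExpansionData T)
    (hθ : 0 < θ) (hg : IsThetaHolder θ g)
    (hper : ∀ n p, 0 < n → IsPeriodicPt T n p → 0 ≤ birkhoffSum T g n p) {η : ℝ} (hη : 0 < η) :
    ∃ ε > 0, ∀ (k₁ k₂ : ℕ) (z₁ z₂ : X), 0 < k₁ + k₂ → dist z₂ (T^[k₁] z₁) < ε →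
      dist (T^[k₂] z₂) z₁ < ε → -η < birkhoffSum T g k₁ z₁ + birkhoffSum T g k₂ z₂ := by
  obtain ⟨ε₁, hε₁, hclose⟩ := E.exists_isPeriodicPt_near hθ hg (half_pos hη)
  obtain ⟨ε₂, hε₂, hjoin⟩ :=
    E.exists_birkhoffSum_concat hθ hg (lt_min (half_pos hη) (half_pos hε₁))
  refine ⟨min ε₂ (ε₁ / 2), lt_min hε₂ (half_pos hε₁), fun k₁ k₂ z₁ z₂ hk h₁₂ h₂₁ => ?_⟩
  obtain ⟨w, hw, hwz, hSw⟩ := hjoin k₁ k₂ z₁ z₂ (h₁₂.trans_le (min_le_left _ _))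
  have hloop : dist (T^[k₁ + k₂] w) w < ε₁ := by
    rw [hw]
    linarith [dist_triangle (T^[k₂] z₂) z₁ w, dist_comm z₁ w, min_le_right ε₂ (ε₁ / 2),
      min_le_right (η / 2) (ε₁ / 2)]
  obtain ⟨p, hp, -, hSp⟩ := hclose _ hk w hloop
  linarith [hper _ p hk hp, (abs_lt.1 hSp).2, min_le_left (η / 2) (ε₁ / 2)]

end ExpansionData

end Expansion

section PeierlsBarrier

variable {X : Type*} [MetricSpace X] {T : X → X} {A : X → ℝ} {Abar θ ε : ℝ} {x y z : X}
  {k : ℕ}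

local notation "𝒮" => birkhoffSum T (fun x => A x - Abar)

theorem birkhoffInf_le_birkhoffSum (hz : dist z x < ε) (hkz : dist (T^[k] z) y < ε) :
    birkhoffInf T A Abar ε x y k ≤ (𝒮 k z : ℝ) :=
  sInf_le ⟨z, hz, hkz, rfl⟩

theorem le_birkhoffInf {M : EReal}
    (h : ∀ z, dist z x < ε → dist (T^[k] z) y < ε → M ≤ (𝒮 k z : ℝ)) :
    M ≤ birkhoffInf T A Abar ε x y k :=
  le_sInf fun _ ⟨z, hz, hkz, hv⟩ => hv ▸ h z hz hkz

theorem exists_birkhoffSum_lt_of_birkhoffInf_lt {M : EReal}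
    (h : birkhoffInf T A Abar ε x y k < M) :
    ∃ z, dist z x < ε ∧ dist (T^[k] z) y < ε ∧ ((𝒮 k z : ℝ) : EReal) < M := by
  obtain ⟨_, ⟨z, hz, hkz, rfl⟩, hlt⟩ := sInf_lt_iff.1 h
  exact ⟨z, hz, hkz, hlt⟩

theorem liminf_birkhoffInf_le_peierlsBarrier (hε : 0 < ε) (x y : X) :
    liminf (birkhoffInf T A Abar ε x y) atTop ≤ peierlsBarrier T A Abar x y :=
  le_iSup (fun e : {e : ℝ // 0 < e} => liminf (birkhoffInf T A Abar e.1 x y) atTop) ⟨ε, hε⟩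

theorem frequently_exists_birkhoffSum_lt_of_peierlsBarrier_lt (hε : 0 < ε) {M : ℝ}
    (h : peierlsBarrier T A Abar x y < M) :
    ∃ᶠ k in atTop, ∃ z, dist z x < ε ∧ dist (T^[k] z) y < ε ∧ ((𝒮 k z : ℝ) : EReal) < M :=
  (frequently_lt_of_liminf_lt (h := (liminf_birkhoffInf_le_peierlsBarrier hε x y).trans_lt h)).mono
    fun _ => exists_birkhoffSum_lt_of_birkhoffInf_lt

theorem exists_isPeriodicPt_birkhoffSum_lt_of_mem_nonwanderingSet [CompleteSpace X]
    (E : ExpansionData T) (hθ : 0 < θ) (hA : IsThetaHolder θ A)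
    (hx : x ∈ nonwanderingSet T A Abar) {η : ℝ} (hη : 0 < η) :
    ∃ k, 0 < k ∧ ∃ p, IsPeriodicPt T k p ∧ dist p x < η ∧ 𝒮 k p < η := by
  obtain ⟨ε, hε, hclose⟩ := E.exists_isPeriodicPt_near hθ (hA.sub_const Abar) (half_pos hη)
  obtain ⟨k, hk, y, hxy, hxky, hSy⟩ := hx (min (ε / 2) (η / 2)) (by positivity)
  have hSy' : |𝒮 k y| < min (ε / 2) (η / 2) := hSy
  have hloop : dist (T^[k] y) y < ε := by
    linarith [dist_triangle (T^[k] y) x y, dist_comm x (T^[k] y), min_le_left (ε / 2) (η / 2)]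
  obtain ⟨p, hp, hpy, hSp⟩ := hclose k hk y hloop
  refine ⟨k, hk, p, hp, ?_, ?_⟩
  · linarith [dist_triangle p y x, dist_comm x y, min_le_right (ε / 2) (η / 2)]
  · linarith [(abs_lt.1 hSp).2, (abs_lt.1 hSy').2, min_le_right (ε / 2) (η / 2)]

theorem peierlsBarrier_self_nonpos [CompleteSpace X] (E : ExpansionData T) (hθ : 0 < θ)
    (hA : IsThetaHolder θ A) (hx : x ∈ nonwanderingSet T A Abar) :
    peierlsBarrier T A Abar x x ≤ 0 := by
  refine iSup_le fun ⟨ε, hε⟩ => EReal.le_of_forall_lt_iff_le.1 fun γ hγ => ?_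
  have hγ' : 0 < γ := by exact_mod_cast hγ
  refine liminf_le_of_frequently_le' (frequently_atTop.2 fun N => ?_)
  obtain ⟨k, hk, p, hp, hpx, hSp⟩ := exists_isPeriodicPt_birkhoffSum_lt_of_mem_nonwanderingSet
    E hθ hA hx (lt_min hε (div_pos hγ' N.cast_add_one_pos))
  have hpx' : dist p x < ε := hpx.trans_le (min_le_left _ _)
  refine ⟨k * (N + 1), by nlinarith, ?_⟩
  calc birkhoffInf T A Abar ε x x (k * (N + 1)) ≤ (𝒮 (k * (N + 1)) p : ℝ) :=
        birkhoffInf_le_birkhoffSum hpx' (by rwa [(hp.mul_const (N + 1)).eq])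
    _ ≤ γ := by
        rw [hp.birkhoffSum_mul, nsmul_eq_mul, EReal.coe_le_coe_iff, ← le_div_iff₀' (by positivity)]
        push_cast
        exact (hSp.trans_le (min_le_right _ _)).le

theorem peierlsBarrier_le_add_of_lt (E : ExpansionData T) (hθ : 0 < θ) (hA : IsThetaHolder θ A)
    {M₁ M₂ : ℝ} (h₁ : peierlsBarrier T A Abar x y < M₁)
    (h₂ : peierlsBarrier T A Abar y z < M₂) :
    peierlsBarrier T A Abar x z ≤ ((M₁ + M₂ : ℝ) : EReal) := by
  refine iSup_le fun ⟨ε, hε⟩ => EReal.le_of_forall_lt_iff_le.1 fun c hc => ?_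
  set η := c - (M₁ + M₂)
  have hη : 0 < η := sub_pos.2 (by exact_mod_cast hc)
  obtain ⟨ε', hε', hjoin⟩ := E.exists_birkhoffSum_concat hθ (hA.sub_const Abar)
    (lt_min (half_pos hε) hη)
  set σ := min (ε / 2) (ε' / 2)
  have hσ : 0 < σ := lt_min (half_pos hε) (half_pos hε')
  obtain ⟨k₂, z₂, h₂y, h₂z, hS₂⟩ :=
    (frequently_exists_birkhoffSum_lt_of_peierlsBarrier_lt hσ h₂).exists
  refine liminf_le_of_frequently_le' (frequently_atTop.2 fun N => ?_)
  obtain ⟨k₁, hk₁, z₁, h₁x, h₁y, hS₁⟩ :=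
    frequently_atTop.1 (frequently_exists_birkhoffSum_lt_of_peierlsBarrier_lt hσ h₁) N
  obtain ⟨w, hw, hwz₁, hSw⟩ := hjoin k₁ k₂ z₁ z₂ (by
    linarith [dist_triangle z₂ y (T^[k₁] z₁), dist_comm y (T^[k₁] z₁),
      min_le_right (ε / 2) (ε' / 2)])
  refine ⟨k₁ + k₂, le_add_right hk₁, ?_⟩
  have hwx : dist w x < ε := by
    linarith [dist_triangle w z₁ x, min_le_left (ε / 2) (ε' / 2), min_le_left (ε / 2) η]
  have hwkz : dist (T^[k₁ + k₂] w) z < ε := by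
    rw [hw]; linarith [min_le_left (ε / 2) (ε' / 2)]
  refine (birkhoffInf_le_birkhoffSum hwx hwkz).trans (EReal.coe_le_coe_iff.2 ?_)
  linarith [EReal.coe_lt_coe_iff.1 hS₁, EReal.coe_lt_coe_iff.1 hS₂, min_le_right (ε / 2) η]

theorem peierlsBarrier_le_add (E : ExpansionData T) (hθ : 0 < θ) (hA : IsThetaHolder θ A)
    (hxy : peierlsBarrier T A Abar x y ≠ ⊥) (hyz : peierlsBarrier T A Abar y z ≠ ⊥) :
    peierlsBarrier T A Abar x z ≤ peierlsBarrier T A Abar x y + peierlsBarrier T A Abar y z := by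
  refine EReal.le_add_of_forall_gt (.inl hxy) (.inr hyz) fun a ha b hb => ?_
  obtain ⟨M₁, h₁, hM₁⟩ := EReal.exists_between_coe_real ha
  obtain ⟨M₂, h₂, hM₂⟩ := EReal.exists_between_coe_real hb
  calc peierlsBarrier T A Abar x z ≤ ((M₁ + M₂ : ℝ) : EReal) :=
        peierlsBarrier_le_add_of_lt E hθ hA h₁ h₂
    _ ≤ a + b := by rw [EReal.coe_add]; exact add_le_add hM₁.le hM₂.le

variable [CompactSpace X] [MeasurableSpace X] [BorelSpace X]

theorem exists_forall_neg_le_peierlsBarrier (hT : IsExpandingTransitive T) (hθ : 0 < θ)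
    (hA : IsThetaHolder θ A) (hAbar : IsErgMinValue T A Abar) (x y : X) {η : ℝ} (hη : 0 < η) :
    ∃ ε > 0, ∀ (k : ℕ) (z : X), dist z y < ε → dist (T^[k] z) x < ε →
      ((-(𝒮 k z + η) : ℝ) : EReal) ≤ peierlsBarrier T A Abar x y := by
  obtain ⟨E⟩ := hT.nonempty_expansionData
  obtain ⟨ε, hε, hloop⟩ := E.exists_forall_neg_lt_birkhoffSum_add hθ (hA.sub_const Abar)
    (fun _ _ hn hp => hAbar.birkhoffSum_nonneg hT.cont.measurable hn hp) hη
  refine ⟨ε / 2, half_pos hε, fun k₂ z₂ h₂y h₂x => ?_⟩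
  refine le_trans ?_ (liminf_birkhoffInf_le_peierlsBarrier (half_pos hε) x y)
  refine le_liminf_of_le
    (h := eventually_atTop.2 ⟨1, fun k₁ hk₁ => le_birkhoffInf fun z₁ h₁x h₁y => ?_⟩)
  have := hloop k₁ k₂ z₁ z₂ (by omega)
    (by linarith [dist_triangle z₂ y (T^[k₁] z₁), dist_comm y (T^[k₁] z₁)])
    (by linarith [dist_triangle (T^[k₂] z₂) x z₁, dist_comm x z₁])
  exact EReal.coe_le_coe_iff.2 (by linarith)

theorem peierlsBarrier_ne_bot (hT : IsExpandingTransitive T) (hθ : 0 < θ)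
    (hA : IsThetaHolder θ A) (hAbar : IsErgMinValue T A Abar) (x y : X) :
    peierlsBarrier T A Abar x y ≠ ⊥ := by
  obtain ⟨ε, hε, hlow⟩ := exists_forall_neg_le_peierlsBarrier hT hθ hA hAbar x y one_pos
  obtain ⟨k, z, hzx, hzy⟩ := hT.transitive (ball x ε) (ball y ε) isOpen_ball isOpen_ball
    ⟨x, mem_ball_self hε⟩ ⟨y, mem_ball_self hε⟩
  exact ne_bot_of_le_ne_bot (EReal.coe_ne_bot _) (hlow k z hzy hzx)

theorem neg_le_peierlsBarrier_of_lt (hT : IsExpandingTransitive T) (hθ : 0 < θ)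
    (hA : IsThetaHolder θ A) (hAbar : IsErgMinValue T A Abar) {M : ℝ}
    (h : peierlsBarrier T A Abar y x < M) :
    ((-M : ℝ) : EReal) ≤ peierlsBarrier T A Abar x y := by
  refine EReal.ge_of_forall_gt_iff_ge.1 fun c hc => ?_
  have hc' : c < -M := by exact_mod_cast hc
  obtain ⟨ε, hε, hlow⟩ := exists_forall_neg_le_peierlsBarrier hT hθ hA hAbar x y
    (by linarith : 0 < -M - c)
  obtain ⟨k, z, hzy, hzx, hS⟩ := (frequently_exists_birkhoffSum_lt_of_peierlsBarrier_lt hε h).exists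
  refine le_trans (EReal.coe_le_coe_iff.2 ?_) (hlow k z hzy hzx)
  linarith [EReal.coe_lt_coe_iff.1 hS]

theorem peierlsBarrier_add_peierlsBarrier_nonneg (hT : IsExpandingTransitive T) (hθ : 0 < θ)
    (hA : IsThetaHolder θ A) (hAbar : IsErgMinValue T A Abar) (x y : X) :
    0 ≤ peierlsBarrier T A Abar x y + peierlsBarrier T A Abar y x := by
  refine EReal.le_add_of_forall_gt (.inl (peierlsBarrier_ne_bot hT hθ hA hAbar x y))
    (.inr (peierlsBarrier_ne_bot hT hθ hA hAbar y x)) fun a ha b hb => ?_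
  obtain ⟨M, hbM, hMb⟩ := EReal.exists_between_coe_real hb
  calc (0 : EReal) = ((-M : ℝ) : EReal) + M := by
        rw [← EReal.coe_add, neg_add_cancel, EReal.coe_zero]
    _ ≤ a + b := add_le_add ((neg_le_peierlsBarrier_of_lt hT hθ hA hAbar hbM).trans ha.le) hMb.le

end PeierlsBarrier

theorem peierls_rel_equivalence_general {X : Type*} [MetricSpace X] [CompactSpace X]
    [MeasurableSpace X] [BorelSpace X]
    (T : X → X) (hT : IsExpandingTransitive T)
    (θ : ℝ) (hθ0 : 0 < θ)
    (A : X → ℝ) (hA : IsThetaHolder θ A)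
    (Abar : ℝ) (hAbar : IsErgMinValue T A Abar) :
    (∀ x ∈ nonwanderingSet T A Abar,
      peierlsBarrier T A Abar x x + peierlsBarrier T A Abar x x = 0) ∧
    (∀ x ∈ nonwanderingSet T A Abar, ∀ y ∈ nonwanderingSet T A Abar,
      peierlsBarrier T A Abar x y + peierlsBarrier T A Abar y x = 0 →
      peierlsBarrier T A Abar y x + peierlsBarrier T A Abar x y = 0) ∧
    (∀ x ∈ nonwanderingSet T A Abar, ∀ y ∈ nonwanderingSet T A Abar,
      ∀ z ∈ nonwanderingSet T A Abar,
      peierlsBarrier T A Abar x y + peierlsBarrier T A Abar y x = 0 →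
      peierlsBarrier T A Abar y z + peierlsBarrier T A Abar z y = 0 →
      peierlsBarrier T A Abar x z + peierlsBarrier T A Abar z x = 0) := by
  obtain ⟨E⟩ := hT.nonempty_expansionData
  set h := peierlsBarrier T A Abar
  have hnonneg := peierlsBarrier_add_peierlsBarrier_nonneg hT hθ0 hA hAbar
  have htri : ∀ x y z, h x z ≤ h x y + h y z := fun x y z =>
    peierlsBarrier_le_add E hθ0 hA (peierlsBarrier_ne_bot hT hθ0 hA hAbar x y)
      (peierlsBarrier_ne_bot hT hθ0 hA hAbar y z)
  refine ⟨fun x hx => ?_, fun x _ y _ hxy => by rwa [add_comm], fun x _ y _ z _ hxy hyz => ?_⟩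
  · have hxx := peierlsBarrier_self_nonpos E hθ0 hA hx
    exact le_antisymm (add_nonpos hxx hxx) (hnonneg x x)
  · refine le_antisymm ?_ (hnonneg x z)
    calc h x z + h z x ≤ (h x y + h y z) + (h z y + h y x) := add_le_add (htri x y z) (htri z y x)
      _ = (h x y + h y x) + (h y z + h z y) := by abel
      _ = 0 := by rw [hxy, hyz, add_zero]

/-- `x ∼ x' ↔ h_A(x, x') + h_A(x', x) = 0` is an equivalence
relation on `Ω(A)`. -/
theorem peierls_rel_equivalence {X : Type*} [MetricSpace X] [CompactSpace X] [Nonempty X]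
    [MeasurableSpace X] [BorelSpace X]
    (T : X → X) (hT : IsExpandingTransitive T)
    (θ : ℝ) (hθ0 : 0 < θ) (hθ1 : θ ≤ 1)
    (A : X → ℝ) (hA : IsThetaHolder θ A)
    (Abar : ℝ) (hAbar : IsErgMinValue T A Abar) :
    (∀ x ∈ nonwanderingSet T A Abar,
      peierlsBarrier T A Abar x x + peierlsBarrier T A Abar x x = 0) ∧
    (∀ x ∈ nonwanderingSet T A Abar, ∀ y ∈ nonwanderingSet T A Abar,
      peierlsBarrier T A Abar x y + peierlsBarrier T A Abar y x = 0 →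
      peierlsBarrier T A Abar y x + peierlsBarrier T A Abar x y = 0) ∧
    (∀ x ∈ nonwanderingSet T A Abar, ∀ y ∈ nonwanderingSet T A Abar,
      ∀ z ∈ nonwanderingSet T A Abar,
      peierlsBarrier T A Abar x y + peierlsBarrier T A Abar y x = 0 →
      peierlsBarrier T A Abar y z + peierlsBarrier T A Abar z y = 0 →
      peierlsBarrier T A Abar x z + peierlsBarrier T A Abar z x = 0) :=
  peierls_rel_equivalence_general T hT θ hθ0 A hA Abar hAbar
end
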